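/- arXiv:1804.02174 — 8 statements merged into one kernel-verified Lean document; each statement's English description precedes it below -/
import Mathlib

section
/- For every i ≥ 0 and every r > 0, the function ψ_i satisfies the differential equation ψ_i''(r) + (2i/r)·ψ_i'(r) − ψ_i(r) = 0. -/
/-- The sequence of functions `ψ_i : ℝ → ℝ` defined inductively by
`ψ_0(r) = exp(−r)` and `ψ_{i+1}(r) = −ψ_i'(r)/r`. -/
noncomputable def psi : ℕ → ℝ → ℝ
  | 0 => fun r => Real.exp (-r)
  | i + 1 => fun r => -(deriv (psi i) r) / r

lemma psi_smooth (i : ℕ) : ContDiffOn ℝ (⊤ : ℕ∞) (psi i) (Set.Ioi 0) := by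
  induction i with
  | zero => exact (Real.contDiff_exp.comp contDiff_id.neg).contDiffOn
  | succ i ih =>
    exact (ih.deriv_of_isOpen isOpen_Ioi (mod_cast le_top)).neg.div contDiffOn_id
      (fun x hx => ne_of_gt hx)

lemma psi_hasDerivAt (i : ℕ) (r : ℝ) (hr : 0 < r) :
    HasDerivAt (psi i) (deriv (psi i) r) r := by
  have := ((psi_smooth i).contDiffAt (isOpen_Ioi.mem_nhds hr)).differentiableAt (by simp)
  exact this.hasDerivAt

lemma psi_deriv_hasDerivAt (i : ℕ) (r : ℝ) (hr : 0 < r) :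
    HasDerivAt (deriv (psi i)) (deriv (deriv (psi i)) r) r := by
  have h : ContDiffOn ℝ (⊤ : ℕ∞) (deriv (psi i)) (Set.Ioi 0) :=
    (psi_smooth i).deriv_of_isOpen isOpen_Ioi (mod_cast le_top)
  exact ((h.contDiffAt (isOpen_Ioi.mem_nhds hr)).differentiableAt (by simp)).hasDerivAt

theorem psi_ode (i : ℕ) : ∀ r : ℝ, 0 < r →
    deriv (deriv (psi i)) r + (2 * (i : ℝ) / r) * deriv (psi i) r - psi i r = 0 := by
  induction i with
  | zero =>
    intro r hr
    have h1 : ∀ x : ℝ, HasDerivAt (psi 0) (-Real.exp (-x)) x := by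
      intro x
      have := (Real.hasDerivAt_exp (-x)).comp x (hasDerivAt_neg x)
      simpa [psi, mul_comm, Function.comp_def] using this
    have hd1 : deriv (psi 0) = fun x => -Real.exp (-x) := by
      funext x; exact (h1 x).deriv
    have h2 : HasDerivAt (deriv (psi 0)) (Real.exp (-r)) r := by
      rw [hd1]
      simpa [Function.comp_def] using ((Real.hasDerivAt_exp (-r)).comp r (hasDerivAt_neg r)).fun_neg
    rw [h2.deriv, hd1]
    simp [psi]
  | succ i ih =>
    intro r hr
    -- first derivative of psi (i+1) at any x > 0
    have hg' : ∀ x : ℝ, 0 < x → HasDerivAt (psi (i + 1))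
        (((2 * (i : ℝ) + 1) * deriv (psi i) x - x * psi i x) / x ^ 2) x := by
      intro x hx
      have hf'' : deriv (deriv (psi i)) x = psi i x - (2 * (i : ℝ) / x) * deriv (psi i) x := by
        have := ih x hx; linarith
      have h := ((psi_deriv_hasDerivAt i x hx).fun_neg.fun_div (hasDerivAt_id' x) (ne_of_gt hx))
      have heq : psi (i + 1) = fun y => -(deriv (psi i) y) / y := rfl
      rw [heq]
      refine h.congr_deriv ?_
      rw [hf'']
      field_simp
      ring
    have hg'r := (hg' r hr).deriv
    -- deriv (psi (i+1)) agrees with the explicit formula near r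
    have hev : deriv (psi (i + 1)) =ᶠ[nhds r]
        (fun x => ((2 * (i : ℝ) + 1) * deriv (psi i) x - x * psi i x) / x ^ 2) := by
      filter_upwards [isOpen_Ioi.mem_nhds hr] with x hx
      exact (hg' x hx).deriv
    -- derivative of the explicit formula at r
    have hnum : HasDerivAt (fun x => (2 * (i : ℝ) + 1) * deriv (psi i) x - x * psi i x)
        ((2 * (i : ℝ) + 1) * deriv (deriv (psi i)) r - (psi i r + r * deriv (psi i) r)) r := by
      have h1 := (psi_deriv_hasDerivAt i r hr).const_mul (2 * (i : ℝ) + 1)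
      have h2 := (hasDerivAt_id' r).fun_mul (psi_hasDerivAt i r hr)
      simpa [mul_comm] using h1.fun_sub h2
    have hden : HasDerivAt (fun x : ℝ => x ^ 2) (2 * r) r := by
      simpa using hasDerivAt_pow 2 r
    have hh : HasDerivAt (fun x => ((2 * (i : ℝ) + 1) * deriv (psi i) x - x * psi i x) / x ^ 2)
        ((((2 * (i : ℝ) + 1) * deriv (deriv (psi i)) r - (psi i r + r * deriv (psi i) r)) * r ^ 2 -
          ((2 * (i : ℝ) + 1) * deriv (psi i) r - r * psi i r) * (2 * r)) / (r ^ 2) ^ 2) r :=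
      hnum.div hden (by positivity)
    have hg'' : deriv (deriv (psi (i + 1))) r =
        (((2 * (i : ℝ) + 1) * deriv (deriv (psi i)) r - (psi i r + r * deriv (psi i) r)) * r ^ 2 -
          ((2 * (i : ℝ) + 1) * deriv (psi i) r - r * psi i r) * (2 * r)) / (r ^ 2) ^ 2 := by
      rw [hev.deriv_eq]; exact hh.deriv
    have hf'' : deriv (deriv (psi i)) r = psi i r - (2 * (i : ℝ) / r) * deriv (psi i) r := by
      have := ih r hr; linarith
    have hval : psi (i + 1) r = -(deriv (psi i) r) / r := rfl
    rw [hg'', hg'r, hval, hf'']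
    have hrne : r ≠ 0 := ne_of_gt hr
    push_cast
    field_simp
    ring

theorem psi_diff_eqn (i : ℕ) (r : ℝ) (hr : 0 < r) :
    deriv (deriv (psi i)) r + (2 * (i : ℝ) / r) * deriv (psi i) r - psi i r = 0 := by
  exact psi_ode i r hr
end

section
/- For every integer n ≥ 1, every i ≥ 0 and every r > 0, one has (L_n ψ_i)(r) = (n − 1 − 2i)·ψ_{i+1}(r), i.e. ψ_i(r) − ψ_i''(r) − ((n−1)/r)·ψ_i'(r) = (n − 1 − 2i)·ψ_{i+1}(r). -/
/-- The radial operator `L_n` given by `(L_n g)(r) = g(r) − g''(r) − ((n−1)/r)·g'(r)`;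
for spherically symmetric functions on `ℝⁿ ∖ {0}` this is `I − Δ` in the radial
coordinate. -/
noncomputable def Lop (n : ℕ) (g : ℝ → ℝ) : ℝ → ℝ :=
  fun r => g r - deriv (deriv g) r - (((n : ℝ) - 1) / r) * deriv g r

lemma hasDerivAt_psi0 (r : ℝ) : HasDerivAt (psi 0) (-Real.exp (-r)) r := by
  have := (Real.hasDerivAt_exp (-r)).comp r (hasDerivAt_neg r)
  simpa [psi, Function.comp_def] using this

lemma deriv_psi0 : deriv (psi 0) = fun x => -Real.exp (-x) :=
  funext fun x => (hasDerivAt_psi0 x).deriv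

lemma psi1_eq : psi 1 = fun x => Real.exp (-x) / x := by
  funext x
  show -(deriv (psi 0) x) / x = _
  rw [deriv_psi0]
  simp

lemma psi_key : ∀ i : ℕ, ∀ r : ℝ, r ≠ 0 →
    HasDerivAt (psi i) (-(r * psi (i+1) r)) r ∧
    HasDerivAt (psi (i+1)) (-((psi i r + (2*(i:ℝ)+1) * psi (i+1) r)/r)) r := by
  intro i
  induction i with
  | zero =>
    intro r hr
    constructor
    · have h : -(r * psi 1 r) = -Real.exp (-r) := by
        rw [psi1_eq]; field_simp
      rw [h]; exact hasDerivAt_psi0 r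
    · have h1 : HasDerivAt (fun x : ℝ => Real.exp (-x) / x)
          ((-Real.exp (-r) * r - Real.exp (-r) * 1) / r ^ 2) r :=
        (hasDerivAt_psi0 r).div (hasDerivAt_id r) hr
      have h2 : HasDerivAt (psi 1)
          ((-Real.exp (-r) * r - Real.exp (-r) * 1) / r ^ 2) r := by
        rw [psi1_eq]
        exact h1
      convert h2 using 1
      rw [psi1_eq]
      show -((psi 0 r + _ * _) / r) = _
      simp only [psi]
      push_cast
      field_simp
      ring
  | succ i ih =>
    intro r hr
    have hd := (ih r hr).2
    have key1 : HasDerivAt (psi (i+1)) (-(r * psi (i+1+1) r)) r := by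
      have h : -(r * psi (i+2) r) = -((psi i r + (2*(i:ℝ)+1) * psi (i+1) r)/r) := by
        have h0 : psi (i+2) r = -(deriv (psi (i+1)) r) / r := rfl
        rw [h0, hd.deriv]
        field_simp
      rw [show i+1+1 = i+2 from rfl, h]
      exact hd
    refine ⟨key1, ?_⟩
    have heq : ∀ x : ℝ, x ≠ 0 →
        psi (i+2) x = (psi i x + (2*(i:ℝ)+1) * psi (i+1) x) / x^2 := by
      intro x hx
      have hdx := (ih x hx).2
      show -(deriv (psi (i+1)) x) / x = _
      rw [hdx.deriv]
      rw [neg_neg, div_div, ← sq]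
    have h1 := (ih r hr).1
    have hg : HasDerivAt (fun x => (psi i x + (2*(i:ℝ)+1) * psi (i+1) x) / x^2)
        (((-(r * psi (i+1) r) + (2*(i:ℝ)+1) * (-((psi i r + (2*(i:ℝ)+1) * psi (i+1) r)/r))) * r^2
          - (psi i r + (2*(i:ℝ)+1) * psi (i+1) r) * (2 * r^1)) / (r^2)^2) r :=
      (h1.add (hd.const_mul _)).div (hasDerivAt_pow 2 r) (pow_ne_zero 2 hr)
    have hEq : psi (i+2) =ᶠ[nhds r] fun x => (psi i x + (2*(i:ℝ)+1) * psi (i+1) x) / x^2 :=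
      Filter.eventuallyEq_of_mem (isOpen_ne.mem_nhds hr) fun x hx => heq x hx
    have hg' := hg.congr_of_eventuallyEq hEq
    refine hg'.congr_deriv ?_
    rw [heq r hr]
    push_cast
    field_simp
    ring

theorem Lop_psi (n : ℕ) (hn : 1 ≤ n) (i : ℕ) (r : ℝ) (hr : 0 < r) :
    Lop n (psi i) r = ((n : ℝ) - 1 - 2 * i) * psi (i + 1) r := by
  have hr' : r ≠ 0 := ne_of_gt hr
  obtain ⟨h1, h2⟩ := psi_key i r hr'
  have hEq : deriv (psi i) =ᶠ[nhds r] fun x => -(x * psi (i+1) x) :=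
    Filter.eventuallyEq_of_mem (isOpen_ne.mem_nhds hr') fun x hx => ((psi_key i x hx).1).deriv
  have hD2 : HasDerivAt (fun x => -(x * psi (i+1) x))
      (-(psi (i+1) r + r * (-((psi i r + (2*(i:ℝ)+1) * psi (i+1) r)/r)))) r := by
    have h := ((hasDerivAt_id r).mul h2).neg
    refine h.congr_deriv ?_
    simp only [id_eq]
    ring
  have hdd : deriv (deriv (psi i)) r
      = -(psi (i+1) r + r * (-((psi i r + (2*(i:ℝ)+1) * psi (i+1) r)/r))) := by
    rw [hEq.deriv_eq]
    exact hD2.deriv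
  simp only [Lop, hdd, h1.deriv]
  field_simp
  ring
end

section
/- Let p ≥ 0 and set n = 2p + 1. Then for every i with 0 ≤ i ≤ p and every r > 0, (L_n^{p+1} ψ_i)(r) = 0. -/
lemma psi_succ_apply (i : ℕ) (r : ℝ) : psi (i + 1) r = -(deriv (psi i) r) / r := rfl

lemma psi_hasDerivAt_s3 : ∀ i : ℕ, ∀ r : ℝ, r ≠ 0 →
    HasDerivAt (psi i) (-r * psi (i + 1) r) r ∧
    HasDerivAt (deriv (psi i)) (psi i r + 2 * i * psi (i + 1) r) r := by
  intro i
  induction i with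
  | zero =>
    intro r hr
    have hexp : ∀ s : ℝ, HasDerivAt (psi 0) (-Real.exp (-s)) s := by
      intro s
      have := (Real.hasDerivAt_exp (-s)).comp s (hasDerivAt_neg s)
      simpa [psi, Function.comp_def] using this
    have hderiv : deriv (psi 0) = fun s => -Real.exp (-s) :=
      funext fun s => (hexp s).deriv
    constructor
    · have h1 : psi 1 r = Real.exp (-r) / r := by
        rw [psi_succ_apply, hderiv]; ring
      have : -r * psi 1 r = -Real.exp (-r) := by
        rw [h1]; field_simp
      rw [this]; exact hexp r
    · rw [hderiv]
      have : HasDerivAt (fun s : ℝ => -Real.exp (-s)) (Real.exp (-r)) r := by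
        have := ((Real.hasDerivAt_exp (-r)).comp r (hasDerivAt_neg r)).neg
        simpa [Function.comp_def, Pi.neg_def] using this
      simpa [psi] using this
  | succ i IH =>
    -- a helper: HasDerivAt (psi (i+1)) at any s ≠ 0, with the raw quotient derivative
    have hraw : ∀ s : ℝ, s ≠ 0 → HasDerivAt (psi (i + 1))
        ((-(psi i s + 2 * i * psi (i + 1) s) * s - -(deriv (psi i) s) * 1) / s ^ 2) s := by
      intro s hs
      obtain ⟨h1, h2⟩ := IH s hs
      have := (h2.neg.div (hasDerivAt_id s) hs)
      have e : psi (i + 1) = -deriv (psi i) / id := by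
        funext t; simp [psi_succ_apply]
      rw [e]; simpa [psi_succ_apply] using this
    -- formula for deriv (psi (i+1)) at any s ≠ 0
    have hF : ∀ s : ℝ, s ≠ 0 →
        deriv (psi (i + 1)) s = -(psi i s + (2 * i + 1) * psi (i + 1) s) / s := by
      intro s hs
      obtain ⟨h1, h2⟩ := IH s hs
      have hd1 : deriv (psi i) s = -s * psi (i + 1) s := h1.deriv
      rw [(hraw s hs).deriv, hd1]
      field_simp
      ring
    intro r hr
    obtain ⟨h1, h2⟩ := IH r hr
    have hd1 : deriv (psi i) r = -r * psi (i + 1) r := h1.deriv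
    -- first component
    have hD : HasDerivAt (psi (i + 1)) (-(psi i r + (2 * i + 1) * psi (i + 1) r) / r) r := by
      have := hraw r hr
      have heq : (-(psi i r + 2 * i * psi (i + 1) r) * r - -(deriv (psi i) r) * 1) / r ^ 2
          = -(psi i r + (2 * i + 1) * psi (i + 1) r) / r := by
        rw [hd1]; field_simp; ring
      rwa [heq] at this
    -- key recurrence : psi (i+2) r = (psi i r + (2i+1) psi (i+1) r) / r^2
    have hrec : psi (i + 2) r = (psi i r + (2 * i + 1) * psi (i + 1) r) / r ^ 2 := by
      rw [psi_succ_apply, hF r hr]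
      field_simp
    have hfirst : HasDerivAt (psi (i + 1)) (-r * psi (i + 2) r) r := by
      have : -r * psi (i + 2) r = -(psi i r + (2 * i + 1) * psi (i + 1) r) / r := by
        rw [hrec]; field_simp
      rw [this]; exact hD
    refine ⟨hfirst, ?_⟩
    -- second component
    have hev : deriv (psi (i + 1)) =ᶠ[nhds r]
        fun s => -(psi i s + (2 * i + 1) * psi (i + 1) s) / s := by
      filter_upwards [eventually_ne_nhds hr] with s hs
      exact hF s hs
    have hN : HasDerivAt (fun s => -(psi i s + (2 * i + 1) * psi (i + 1) s))
        (-(-r * psi (i + 1) r + (2 * i + 1) * (-r * psi (i + 2) r))) r :=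
      (h1.add ((hfirst.const_mul (2 * (i : ℝ) + 1)))).neg
    have hG : HasDerivAt (fun s => -(psi i s + (2 * i + 1) * psi (i + 1) s) / s)
        ((-(-r * psi (i + 1) r + (2 * i + 1) * (-r * psi (i + 2) r)) * r
          - -(psi i r + (2 * i + 1) * psi (i + 1) r) * 1) / r ^ 2) r :=
      hN.div (hasDerivAt_id r) hr
    have htarget : (-(-r * psi (i + 1) r + (2 * i + 1) * (-r * psi (i + 2) r)) * r
          - -(psi i r + (2 * i + 1) * psi (i + 1) r) * 1) / r ^ 2
        = psi (i + 1) r + 2 * (i + 1 : ℕ) * psi (i + 1 + 1) r := by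
      push_cast
      rw [show psi (i + 1 + 1) = psi (i + 2) from rfl]
      have h2' : psi i r + (2 * i + 1) * psi (i + 1) r = r ^ 2 * psi (i + 2) r := by
        rw [hrec]; field_simp
      rw [div_eq_iff (pow_ne_zero 2 hr)]
      linear_combination h2'
    rw [← htarget]
    exact hG.congr_of_eventuallyEq hev

lemma lop_psi (p i : ℕ) (r : ℝ) (hr : r ≠ 0) :
    Lop (2 * p + 1) (psi i) r = (2 * ((p : ℝ) - i)) * psi (i + 1) r := by
  obtain ⟨h1, h2⟩ := psi_hasDerivAt_s3 i r hr
  simp only [Lop, h1.deriv, h2.deriv]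
  push_cast
  field_simp
  ring

lemma lop_congr (n : ℕ) {f g : ℝ → ℝ} (h : ∀ s : ℝ, s ≠ 0 → f s = g s) :
    ∀ s : ℝ, s ≠ 0 → Lop n f s = Lop n g s := by
  intro s hs
  have hev : f =ᶠ[nhds s] g := by
    filter_upwards [eventually_ne_nhds hs] with t ht using h t ht
  have hd : deriv f =ᶠ[nhds s] deriv g := hev.deriv
  have hdd : deriv (deriv f) =ᶠ[nhds s] deriv (deriv g) := hd.deriv
  simp only [Lop, hev.eq_of_nhds, hd.eq_of_nhds, hdd.eq_of_nhds]

lemma lop_iter_congr (n k : ℕ) {f g : ℝ → ℝ} (h : ∀ s : ℝ, s ≠ 0 → f s = g s) :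
    ∀ s : ℝ, s ≠ 0 → (Lop n)^[k] f s = (Lop n)^[k] g s := by
  induction k generalizing f g with
  | zero => simpa using h
  | succ k IH =>
    intro s hs
    rw [Function.iterate_succ_apply, Function.iterate_succ_apply]
    exact IH (lop_congr n h) s hs

lemma lop_const_mul (n : ℕ) (c : ℝ) (g : ℝ → ℝ) :
    Lop n (fun s => c * g s) = fun s => c * Lop n g s := by
  funext s
  have h1 : deriv (fun s => c * g s) = fun s => c * deriv g s :=
    funext fun t => deriv_const_mul_field c
  have h2 : deriv (fun s => c * deriv g s) s = c * deriv (deriv g) s :=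
    deriv_const_mul_field c
  simp only [Lop, h1, h2]
  ring

lemma lop_iter_const_mul (n k : ℕ) (c : ℝ) (g : ℝ → ℝ) :
    (Lop n)^[k] (fun s => c * g s) = fun s => c * (Lop n)^[k] g s := by
  induction k generalizing g with
  | zero => simp
  | succ k IH =>
    rw [Function.iterate_succ_apply, Function.iterate_succ_apply, lop_const_mul, IH]

lemma lop_zero (n : ℕ) : Lop n (fun _ => (0 : ℝ)) = fun _ => (0 : ℝ) := by
  simpa using lop_const_mul n 0 (fun _ => (1 : ℝ))

lemma lop_iter_zero (n k : ℕ) : (Lop n)^[k] (fun _ => (0 : ℝ)) = fun _ => (0 : ℝ) := by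
  induction k with
  | zero => rfl
  | succ k IH => rw [Function.iterate_succ_apply, lop_zero, IH]

lemma key (p : ℕ) : ∀ d i : ℕ, i + d = p → ∀ r : ℝ, r ≠ 0 →
    (Lop (2 * p + 1))^[d + 1] (psi i) r = 0 := by
  intro d
  induction d with
  | zero =>
    intro i hip r hr
    have hip' : i = p := by omega
    subst hip'
    rw [Function.iterate_one, lop_psi i i r hr]
    ring
  | succ d IH =>
    intro i hip r hr
    rw [Function.iterate_succ_apply]
    have h : ∀ s : ℝ, s ≠ 0 →
        Lop (2 * p + 1) (psi i) s = (2 * ((p : ℝ) - i)) * psi (i + 1) s := fun s hs =>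
      lop_psi p i s hs
    rw [lop_iter_congr (2 * p + 1) (d + 1) h r hr, lop_iter_const_mul]
    beta_reduce
    rw [IH (i + 1) (by omega) r hr, mul_zero]

theorem Lop_iterate_psi_eq_zero (p : ℕ) (i : ℕ) (hi : i ≤ p) (r : ℝ) (hr : 0 < r) :
    (Lop (2 * p + 1))^[p + 1] (psi i) r = 0 := by
  have hr' : r ≠ 0 := ne_of_gt hr
  have hsplit : p + 1 = i + (p - i + 1) := by omega
  rw [hsplit, Function.iterate_add_apply]
  have h0 : ∀ s : ℝ, s ≠ 0 →
      (Lop (2 * p + 1))^[p - i + 1] (psi i) s = (fun _ => (0 : ℝ)) s := by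
    intro s hs
    exact key p (p - i) i (by omega) s hs
  rw [lop_iter_congr (2 * p + 1) i h0 r hr', lop_iter_zero]
end

section
/- Let p ≥ 0, set n = 2p + 1, and let g : ℝ → ℝ be smooth on (0,∞). If (L_n^{p+1} g)(r) = 0 for all r > 0 and g(r) → 0 as r → ∞, then there exist real coefficients a_0, …, a_p such that g(r) = Σ_{i=0}^{p} a_i·ψ_i(r) for all r > 0. -/
open Set Filter Polynomial

/-- the ladder construction -/
noncomputable def ladder (f : ℝ → ℝ) : ℕ → ℝ → ℝ
  | 0 => f
  | i + 1 => fun r => -(deriv (ladder f i) r) / r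

noncomputable def nexp : ℝ → ℝ := fun r => Real.exp (-r)

lemma psi_eq_ladder : ∀ i, psi i = ladder nexp i := by
  intro i
  induction i with
  | zero => rfl
  | succ i ih => funext r; simp [psi, ladder, ih]

lemma nexp_hasDeriv (r : ℝ) : HasDerivAt nexp (-nexp r) r := by
  have h : HasDerivAt nexp (Real.exp (-r) * -1) r := (Real.hasDerivAt_exp (-r)).comp r (hasDerivAt_neg r)
  exact h.congr_deriv (by simp only [nexp]; ring)

lemma deriv_nexp : deriv nexp = fun r => -nexp r := by
  funext r; exact (nexp_hasDeriv r).deriv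

structure LadderBase (f : ℝ → ℝ) : Prop where
  h1 : ∀ r, HasDerivAt f (deriv f r) r
  h2 : ∀ r, HasDerivAt (deriv f) (f r) r

lemma nexp_base : LadderBase nexp := by
  constructor
  · intro r; simpa [deriv_nexp] using nexp_hasDeriv r
  · intro r
    rw [deriv_nexp]
    exact (nexp_hasDeriv r).neg.congr_deriv (neg_neg _)

lemma exp_base : LadderBase Real.exp := by
  constructor
  · intro r; simpa [Real.deriv_exp] using Real.hasDerivAt_exp r
  · intro r; simpa [Real.deriv_exp] using Real.hasDerivAt_exp r

/-- Joint derivative induction for the ladder. -/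
lemma ladder_hasDeriv {f : ℝ → ℝ} (hf : LadderBase f) (i : ℕ) :
    ∀ r > (0:ℝ), HasDerivAt (ladder f i) (deriv (ladder f i) r) r ∧
      HasDerivAt (deriv (ladder f i))
        (ladder f i r - 2*i*(deriv (ladder f i) r)/r) r := by
  induction i with
  | zero =>
    intro r hr
    refine ⟨hf.h1 r, ?_⟩
    simpa [ladder] using hf.h2 r
  | succ i ih =>
    intro r hr
    have hr' : r ≠ 0 := ne_of_gt hr
    -- ladder f (i+1) = fun s => -(deriv (ladder f i) s)/s
    have hL : ladder f (i+1) = fun s => -(deriv (ladder f i) s) / s := rfl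
    -- derivative of ladder f (i+1) at any s > 0
    have key : ∀ s > (0:ℝ), HasDerivAt (ladder f (i+1))
        (-(ladder f i s)/s + (2*i+1) * deriv (ladder f i) s / s^2) s := by
      intro s hs
      have hs' : s ≠ 0 := ne_of_gt hs
      have h2 := (ih s hs).2
      have hq : HasDerivAt (fun t => -(deriv (ladder f i) t) / t)
          ((-(ladder f i s - 2*i*(deriv (ladder f i) s)/s) * s -
            (-(deriv (ladder f i) s)) * 1) / s^2) s := by
        exact (h2.neg.div (hasDerivAt_id s) hs')
      rw [hL]
      convert hq using 1
      field_simp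
      ring
    have hd1 : HasDerivAt (ladder f (i+1)) (deriv (ladder f (i+1)) r) r := by
      have h := key r hr
      rw [h.deriv]; exact h
    refine ⟨hd1, ?_⟩
    -- deriv (ladder f (i+1)) agrees with explicit E on Ioi 0
    set E : ℝ → ℝ := fun s => -(ladder f i s)/s + (2*i+1) * deriv (ladder f i) s / s^2 with hE
    have heq : deriv (ladder f (i+1)) =ᶠ[nhds r] E := by
      filter_upwards [Ioi_mem_nhds hr] with s hs
      exact (key s hs).deriv
    have hEr : deriv (ladder f (i+1)) r = E r := (key r hr).deriv
    -- differentiate E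
    have hE' : HasDerivAt E
        ((-(deriv (ladder f i) r) * r - (-(ladder f i r)) * 1)/r^2 +
         ((2*i+1) * (ladder f i r - 2*i*(deriv (ladder f i) r)/r) * r^2 -
          (2*i+1) * deriv (ladder f i) r * (2*r)) / (r^2)^2) r := by
      have ha := (ih r hr).1
      have hb := (ih r hr).2
      exact ((ha.neg.div (hasDerivAt_id r) hr').add
        ((hb.const_mul ((2:ℝ)*i+1)).div ((hasDerivAt_pow 2 r).congr_deriv (by norm_num)) (pow_ne_zero 2 hr')))
    have : HasDerivAt (deriv (ladder f (i+1)))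
        ((-(deriv (ladder f i) r) * r - (-(ladder f i r)) * 1)/r^2 +
         ((2*i+1) * (ladder f i r - 2*i*(deriv (ladder f i) r)/r) * r^2 -
          (2*i+1) * deriv (ladder f i) r * (2*r)) / (r^2)^2) r :=
      hE'.congr_of_eventuallyEq heq
    convert this using 1
    rw [hEr]
    have hL1 : ladder f (i+1) r = -(deriv (ladder f i) r) / r := rfl
    rw [hL1, hE]
    push_cast
    field_simp
    ring

lemma ladder_diffAt {f : ℝ → ℝ} (hf : LadderBase f) (i : ℕ) {r : ℝ} (hr : 0 < r) :
    HasDerivAt (ladder f i) (deriv (ladder f i) r) r := (ladder_hasDeriv hf i r hr).1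

lemma ladder_deriv2 {f : ℝ → ℝ} (hf : LadderBase f) (i : ℕ) {r : ℝ} (hr : 0 < r) :
    deriv (deriv (ladder f i)) r = ladder f i r - 2*i*(deriv (ladder f i) r)/r :=
  (ladder_hasDeriv hf i r hr).2.deriv

lemma ladder_deriv_succ {f : ℝ → ℝ} (hf : LadderBase f) (i : ℕ) {r : ℝ} (hr : 0 < r) :
    deriv (ladder f (i+1)) r = -(ladder f i r)/r + (2*i+1) * deriv (ladder f i) r / r^2 := by
  have hr' : r ≠ 0 := ne_of_gt hr
  have h2 := (ladder_hasDeriv hf i r hr).2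
  have hq : HasDerivAt (fun t => -(deriv (ladder f i) t) / t)
      ((-(ladder f i r - 2*i*(deriv (ladder f i) r)/r) * r -
        (-(deriv (ladder f i) r)) * 1) / r^2) r :=
    h2.neg.div (hasDerivAt_id r) hr'
  have : HasDerivAt (ladder f (i+1))
      ((-(ladder f i r - 2*i*(deriv (ladder f i) r)/r) * r -
        (-(deriv (ladder f i) r)) * 1) / r^2) r := hq
  rw [this.deriv]
  field_simp
  ring

lemma Lop_ladder {f : ℝ → ℝ} (hf : LadderBase f) (p i : ℕ) {r : ℝ} (hr : 0 < r) :
    Lop (2*p+1) (ladder f i) r = (2*(p:ℝ) - 2*i) * ladder f (i+1) r := by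
  have hr' : r ≠ 0 := ne_of_gt hr
  have hL1 : ladder f (i+1) r = -(deriv (ladder f i) r) / r := rfl
  rw [Lop, ladder_deriv2 hf i hr, hL1]
  push_cast
  field_simp
  ring

/-- positivity of psi ladder -/
lemma nexp_ladder_pos (i : ℕ) : ∀ r > (0:ℝ), 0 < ladder nexp i r ∧ deriv (ladder nexp i) r < 0 := by
  induction i with
  | zero =>
    intro r hr
    constructor
    · exact Real.exp_pos _
    · show deriv nexp r < 0
      rw [deriv_nexp]
      exact neg_lt_zero.mpr (Real.exp_pos _)
  | succ i ih =>
    intro r hr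
    have hr' : r ≠ 0 := ne_of_gt hr
    obtain ⟨h1, h2⟩ := ih r hr
    constructor
    · show 0 < -(deriv (ladder nexp i) r) / r
      exact div_pos (by linarith) hr
    · rw [ladder_deriv_succ nexp_base i hr]
      have b1 : -(ladder nexp i r)/r < 0 := div_neg_of_neg_of_pos (neg_lt_zero.mpr h1) hr
      have b2 : (2*(i:ℝ)+1) * deriv (ladder nexp i) r / r^2 < 0 := by
        have hp : (0:ℝ) < 2*(i:ℝ)+1 := by positivity
        exact div_neg_of_neg_of_pos (mul_neg_of_pos_of_neg hp h2) (pow_pos hr 2)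
      linarith

noncomputable def phi : ℕ → ℝ → ℝ := ladder Real.exp

/-- Wronskian identity -/
lemma wronskian_ladder (i : ℕ) : ∀ r > (0:ℝ),
    r^(2*i) * (ladder nexp i r * deriv (phi i) r - deriv (ladder nexp i) r * phi i r)
      = 2 * (-1)^i := by
  induction i with
  | zero =>
    intro r hr
    simp only [ladder, phi, deriv_nexp, Real.deriv_exp, nexp, pow_zero, one_mul]
    have h1 : Real.exp (-r) * Real.exp r = 1 := by rw [← Real.exp_add]; simp
    norm_num
    linear_combination 2*h1
  | succ i ih =>
    intro r hr
    have hr' : r ≠ 0 := ne_of_gt hr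
    have e1 : ladder nexp (i+1) r = -(deriv (ladder nexp i) r) / r := rfl
    have e2 : phi (i+1) r = -(deriv (phi i) r) / r := rfl
    have e3 := ladder_deriv_succ nexp_base i hr
    have e4 := ladder_deriv_succ exp_base i hr
    have epow : r^(2*(i+1)) = r^(2*i) * r^2 := by ring
    rw [e1, e2, e3, epow]
    show r ^ (2 * i) * r ^ 2 *
      (-deriv (ladder nexp i) r / r * deriv (ladder Real.exp (i+1)) r -
        (-(ladder nexp i r) / r + (2 * ↑i + 1) * deriv (ladder nexp i) r / r ^ 2) *
          (-(deriv (ladder Real.exp i) r) / r)) = 2 * (-1) ^ (i+1)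
    rw [show deriv (ladder Real.exp (i+1)) r = -(ladder Real.exp i r)/r + (2*i+1) * deriv (ladder Real.exp i) r / r^2 from e4]
    have := ih r hr
    rw [phi] at this
    have goal_eq : r ^ (2 * i) * r ^ 2 *
      (-deriv (ladder nexp i) r / r * (-(ladder Real.exp i r)/r + (2*i+1) * deriv (ladder Real.exp i) r / r^2) -
        (-(ladder nexp i r) / r + (2 * ↑i + 1) * deriv (ladder nexp i) r / r ^ 2) *
          (-(deriv (ladder Real.exp i) r) / r))
        = -(r^(2*i) * (ladder nexp i r * deriv (ladder Real.exp i) r - deriv (ladder nexp i) r * ladder Real.exp i r)) := by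
      field_simp
      ring
    rw [goal_eq, this]
    ring

lemma const_on_Ioi {f : ℝ → ℝ} (h : ∀ r > (0:ℝ), HasDerivAt f 0 r) :
    ∀ r > (0:ℝ), f r = f 1 := by
  intro r hr
  set a := min r 1 with ha
  set b := max r 1 with hb
  have hab : a ≤ b := min_le_max
  have ha0 : 0 < a := lt_min hr one_pos
  have hcont : ContinuousOn f (Icc a b) := by
    intro x hx
    exact (h x (lt_of_lt_of_le ha0 hx.1)).continuousAt.continuousWithinAt
  have hkey := constant_of_has_deriv_right_zero hcont
    (fun x hx => (h x (lt_of_lt_of_le ha0 hx.1)).hasDerivWithinAt)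
  have h1 : f r = f a := hkey r ⟨min_le_left _ _, le_max_left _ _⟩
  have h2 : f 1 = f a := hkey 1 ⟨min_le_right _ _, le_max_right _ _⟩
  rw [h1, h2]

lemma cast_mul_pow_sub (n : ℕ) {r : ℝ} (hr : r ≠ 0) :
    (n:ℝ) * r^(n-1) = n * r^n / r := by
  cases n with
  | zero => simp
  | succ k => rw [pow_succ]; push_cast; field_simp

lemma kernel_single (p : ℕ) (u : ℝ → ℝ)
    (hu1 : ∀ r > (0:ℝ), HasDerivAt u (deriv u r) r)
    (hu2 : ∀ r > (0:ℝ), HasDerivAt (deriv u) (deriv (deriv u) r) r)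
    (hode : ∀ r > (0:ℝ), Lop (2*p+1) u r = 0) :
    ∃ a b : ℝ, ∀ r > (0:ℝ), u r = a * ladder nexp p r + b * phi p r := by
  have hdd : ∀ r > (0:ℝ), deriv (deriv u) r = u r - 2*p * deriv u r / r := by
    intro r hr
    have := hode r hr
    rw [Lop] at this
    push_cast at this
    linear_combination -this
  set ψ : ℝ → ℝ := ladder nexp p with hψ
  set J : ℝ → ℝ := fun r => r^(2*p) * (ψ r * deriv u r - deriv ψ r * u r) with hJdef
  have hJ : ∀ r > (0:ℝ), HasDerivAt J 0 r := by
    intro r hr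
    have hr' : r ≠ 0 := ne_of_gt hr
    have hψ1 := ladder_diffAt nexp_base p hr
    have hψ2 := (ladder_hasDeriv nexp_base p r hr).2
    have hA : HasDerivAt J
        ((↑(2*p) * r^(2*p-1)) * (ψ r * deriv u r - deriv ψ r * u r) +
          r^(2*p) * ((deriv ψ r * deriv u r + ψ r * deriv (deriv u) r) -
            ((ψ r - 2*↑p*(deriv ψ r)/r) * u r + deriv ψ r * deriv u r))) r :=
      (hasDerivAt_pow (2*p) r).mul ((hψ1.mul (hu2 r hr)).sub (hψ2.mul (hu1 r hr)))
    convert hA using 1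
    rw [hdd r hr, cast_mul_pow_sub (2*p) hr']
    push_cast
    field_simp
    ring
  set C : ℝ := J 1 with hC
  have hJc : ∀ r > (0:ℝ), J r = C := fun r hr => const_on_Ioi hJ r hr
  set c : ℝ := 2 * (-1)^p with hc
  have hc0 : c ≠ 0 := by
    rw [hc]
    positivity
  have hW := wronskian_ladder p
  set v : ℝ → ℝ := fun r => u r - (C/c) * phi p r with hv
  have hv' : ∀ r > (0:ℝ), HasDerivAt v (deriv u r - C/c * deriv (phi p) r) r := by
    intro r hr
    exact (hu1 r hr).sub ((ladder_diffAt exp_base p hr).const_mul (C/c))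
  have hwzero : ∀ r > (0:ℝ), ψ r * (deriv u r - C/c * deriv (phi p) r) - deriv ψ r * v r = 0 := by
    intro r hr
    have hr' : r ≠ 0 := ne_of_gt hr
    have h1 : r ^ (2*p) * (ψ r * deriv u r - deriv ψ r * u r) = C := hJc r hr
    have h2 := hW r hr
    have hrp : r^(2*p) ≠ 0 := pow_ne_zero _ hr'
    have expand : r^(2*p) * (ψ r * (deriv u r - C/c * deriv (phi p) r) - deriv ψ r * v r)
        = (r^(2*p) * (ψ r * deriv u r - deriv ψ r * u r))
          - (C/c) * (r^(2*p) * (ψ r * deriv (phi p) r - deriv ψ r * phi p r)) := by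
      simp only [hv]; ring
    have : r^(2*p) * (ψ r * (deriv u r - C/c * deriv (phi p) r) - deriv ψ r * v r) = 0 := by
      rw [expand, h1, h2, ← hc]
      field_simp
      ring
    exact (mul_eq_zero.mp this).resolve_left hrp
  have hψpos : ∀ r > (0:ℝ), 0 < ψ r := fun r hr => (nexp_ladder_pos p r hr).1
  set w : ℝ → ℝ := fun r => v r / ψ r with hw
  have hw' : ∀ r > (0:ℝ), HasDerivAt w 0 r := by
    intro r hr
    have hψ1 := ladder_diffAt nexp_base p hr
    have hne : ψ r ≠ 0 := ne_of_gt (hψpos r hr)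
    have hd : HasDerivAt w
        (((deriv u r - C/c * deriv (phi p) r) * ψ r - v r * deriv ψ r) / (ψ r)^2) r :=
      (hv' r hr).div hψ1 hne
    convert hd using 1
    have h0 := hwzero r hr
    rw [eq_comm, _root_.div_eq_zero_iff]
    left; linear_combination h0
  set A : ℝ := w 1 with hA
  refine ⟨A, C/c, ?_⟩
  intro r hr
  have hwr : w r = A := const_on_Ioi hw' r hr
  simp only [hw] at hwr
  have hne : ψ r ≠ 0 := ne_of_gt (hψpos r hr)
  have hvr : v r = A * ψ r := by
    rw [div_eq_iff hne] at hwr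
    rw [hwr]
  have hvr2 : u r - C/c * phi p r = A * ψ r := hvr
  show u r = A * ψ r + C/c * phi p r
  linarith

def Der2 (f : ℝ → ℝ) : Prop :=
  ∀ r > (0:ℝ), HasDerivAt f (deriv f r) r ∧ HasDerivAt (deriv f) (deriv (deriv f) r) r

lemma second_deriv_congr {f E : ℝ → ℝ} {v r : ℝ} (hr : 0 < r)
    (hder : ∀ s > (0:ℝ), HasDerivAt f (E s) s) (hE : HasDerivAt E v r) :
    HasDerivAt (deriv f) v r ∧ deriv f r = E r ∧ deriv (deriv f) r = v := by
  have heq : deriv f =ᶠ[nhds r] E := by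
    filter_upwards [Ioi_mem_nhds hr] with s hs
    exact (hder s hs).deriv
  have h1 : HasDerivAt (deriv f) v r := hE.congr_of_eventuallyEq heq
  exact ⟨h1, (hder r hr).deriv, h1.deriv⟩

lemma Der2.ladder {f : ℝ → ℝ} (hf : LadderBase f) (i : ℕ) : Der2 (ladder f i) := by
  intro r hr
  obtain ⟨h1, h2⟩ := ladder_hasDeriv hf i r hr
  exact ⟨h1, h2.deriv.symm ▸ h2⟩

/-- combination data -/
lemma der2_comb_full (α β : ℝ) {f g : ℝ → ℝ} (hf : Der2 f) (hg : Der2 g) :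
    Der2 (fun s => α * f s + β * g s) ∧
    (∀ r > (0:ℝ), deriv (fun s => α * f s + β * g s) r = α * deriv f r + β * deriv g r) ∧
    (∀ r > (0:ℝ), deriv (deriv (fun s => α * f s + β * g s)) r
        = α * deriv (deriv f) r + β * deriv (deriv g) r) := by
  have hder : ∀ s > (0:ℝ), HasDerivAt (fun t => α * f t + β * g t)
      ((fun t => α * deriv f t + β * deriv g t) s) s := by
    intro s hs
    exact (((hf s hs).1.const_mul α).add ((hg s hs).1.const_mul β))
  have key : ∀ r > (0:ℝ),
      HasDerivAt (deriv (fun s => α * f s + β * g s))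
        (α * deriv (deriv f) r + β * deriv (deriv g) r) r ∧
      deriv (fun s => α * f s + β * g s) r = α * deriv f r + β * deriv g r ∧
      deriv (deriv (fun s => α * f s + β * g s)) r
        = α * deriv (deriv f) r + β * deriv (deriv g) r := by
    intro r hr
    exact second_deriv_congr hr hder
      (((hf r hr).2.const_mul α).add ((hg r hr).2.const_mul β))
  refine ⟨?_, fun r hr => (key r hr).2.1, fun r hr => (key r hr).2.2⟩
  intro r hr
  refine ⟨(hder r hr).congr_deriv ((key r hr).2.1).symm, ?_⟩
  exact ((key r hr).1).congr_deriv ((key r hr).2.2).symm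

lemma der2_sum_full (m : ℕ) (G : ℕ → ℝ → ℝ) (h : ∀ i < m, Der2 (G i)) :
    Der2 (fun s => ∑ i ∈ Finset.range m, G i s) ∧
    (∀ r > (0:ℝ), deriv (fun s => ∑ i ∈ Finset.range m, G i s) r
        = ∑ i ∈ Finset.range m, deriv (G i) r) ∧
    (∀ r > (0:ℝ), deriv (deriv (fun s => ∑ i ∈ Finset.range m, G i s)) r
        = ∑ i ∈ Finset.range m, deriv (deriv (G i)) r) := by
  have hder : ∀ s > (0:ℝ), HasDerivAt (fun t => ∑ i ∈ Finset.range m, G i t)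
      ((fun t => ∑ i ∈ Finset.range m, deriv (G i) t) s) s := by
    intro s hs
    exact HasDerivAt.fun_sum (fun i hi => (h i (Finset.mem_range.mp hi) s hs).1)
  have key : ∀ r > (0:ℝ), _ ∧ _ ∧ _ := fun r hr => second_deriv_congr hr hder
      (HasDerivAt.fun_sum (fun i hi => (h i (Finset.mem_range.mp hi) r hr).2))
  refine ⟨?_, fun r hr => (key r hr).2.1, fun r hr => (key r hr).2.2⟩
  intro r hr
  refine ⟨(hder r hr).congr_deriv ((key r hr).2.1).symm, ?_⟩
  exact ((key r hr).1).congr_deriv ((key r hr).2.2).symm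

lemma Lop_comb (n : ℕ) (α β : ℝ) {f g : ℝ → ℝ} (hf : Der2 f) (hg : Der2 g) :
    ∀ r > (0:ℝ), Lop n (fun s => α * f s + β * g s) r = α * Lop n f r + β * Lop n g r := by
  intro r hr
  obtain ⟨-, hd1, hd2⟩ := der2_comb_full α β hf hg
  rw [Lop, Lop, Lop, hd1 r hr, hd2 r hr]
  ring

lemma Lop_sum (n m : ℕ) (G : ℕ → ℝ → ℝ) (h : ∀ i < m, Der2 (G i)) :
    ∀ r > (0:ℝ), Lop n (fun s => ∑ i ∈ Finset.range m, G i s) r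
      = ∑ i ∈ Finset.range m, Lop n (G i) r := by
  intro r hr
  obtain ⟨-, hd1, hd2⟩ := der2_sum_full m G h
  rw [Lop, hd1 r hr, hd2 r hr, Finset.mul_sum, ← Finset.sum_sub_distrib, ← Finset.sum_sub_distrib]
  exact Finset.sum_congr rfl (fun i _ => by rw [Lop])

def Nice (f : ℝ → ℝ) : Prop := ∀ k : ℕ, ContDiffOn ℝ k f (Set.Ioi 0)

lemma Nice.deriv' {f : ℝ → ℝ} (hf : Nice f) : Nice (deriv f) := by
  intro k
  have h := (hf (k+1)).deriv_of_isOpen isOpen_Ioi (m := k) (by push_cast; rfl)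
  exact h

lemma Nice.hasDeriv {f : ℝ → ℝ} (hf : Nice f) {r : ℝ} (hr : 0 < r) :
    HasDerivAt f (deriv f r) r :=
  (((hf 1).differentiableOn (by norm_cast)).differentiableAt (Ioi_mem_nhds hr)).hasDerivAt

lemma Nice.der2 {f : ℝ → ℝ} (hf : Nice f) : Der2 f :=
  fun _ hr => ⟨hf.hasDeriv hr, hf.deriv'.hasDeriv hr⟩

lemma Nice.lop {g : ℝ → ℝ} (n : ℕ) (hg : Nice g) : Nice (Lop n g) := by
  intro k
  have hdiv : ContDiffOn ℝ k (fun r : ℝ => ((n:ℝ)-1)/r) (Ioi 0) :=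
    ContDiffOn.div contDiffOn_const contDiffOn_id (fun x hx => ne_of_gt hx)
  show ContDiffOn ℝ k (fun r => g r - deriv (deriv g) r - (((n:ℝ)-1)/r) * deriv g r) (Ioi 0)
  exact ((hg k).sub (hg.deriv'.deriv' k)).sub (hdiv.mul (hg.deriv' k))

lemma phi_def : phi = ladder Real.exp := rfl

lemma structure_lemma (p : ℕ) : ∀ k : ℕ, k ≤ p → ∀ g : ℝ → ℝ, Nice g →
    (∀ r > (0:ℝ), (Lop (2*p+1))^[k+1] g r = 0) →
    ∃ a b : ℕ → ℝ, (∀ i, i < p - k → (a i = 0 ∧ b i = 0)) ∧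
      ∀ r > (0:ℝ), g r = ∑ i ∈ Finset.range (p+1),
        (a i * ladder nexp i r + b i * phi i r) := by
  intro k
  induction k with
  | zero =>
    intro _ g hg hsol
    have hode : ∀ r > (0:ℝ), Lop (2*p+1) g r = 0 := by
      intro r hr
      have := hsol r hr
      rwa [Function.iterate_one] at this
    obtain ⟨A, B, hAB⟩ := kernel_single p g (fun r hr => (hg.der2 r hr).1)
      (fun r hr => (hg.der2 r hr).2) hode
    refine ⟨fun i => if i = p then A else 0, fun i => if i = p then B else 0, ?_, ?_⟩
    · intro i hi
      have : i ≠ p := by omega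
      simp [this]
    · intro r hr
      rw [hAB r hr,
        Finset.sum_eq_single p (fun i _ hip => by simp [hip])
          (fun hc => absurd (Finset.self_mem_range_succ p) hc)]
      simp
  | succ k ih =>
    intro hk1p g hg hsol
    have hkp : k ≤ p := by omega
    have hkltp : k < p := by omega
    set h : ℝ → ℝ := Lop (2*p+1) g with hh_def
    have hh : Nice h := hg.lop _
    have hsolh : ∀ r > (0:ℝ), (Lop (2*p+1))^[k+1] h r = 0 := by
      intro r hr
      have := hsol r hr
      rwa [Function.iterate_succ_apply] at this
    obtain ⟨a, b, hz, hrep⟩ := ih hkp h hh hsolh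
    set a' : ℕ → ℝ := fun i => if i < p then a (i+1) / (2*(p:ℝ) - 2*i) else 0 with ha'
    set b' : ℕ → ℝ := fun i => if i < p then b (i+1) / (2*(p:ℝ) - 2*i) else 0 with hb'
    set G : ℕ → ℝ → ℝ := fun i s => a' i * ladder nexp i s + b' i * phi i s with hG
    have hGd : ∀ i, i < p+1 → Der2 (G i) := fun i _ =>
      (der2_comb_full (a' i) (b' i) (Der2.ladder nexp_base i) (Der2.ladder exp_base i)).1
    set g₀ : ℝ → ℝ := fun s => ∑ i ∈ Finset.range (p+1), G i s with hg₀
    have hcoef : ∀ i : ℕ, i < p → (2*(p:ℝ) - 2*i) ≠ 0 := by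
      intro i hip
      have : (i:ℝ) < p := by exact_mod_cast hip
      intro hzero
      linarith
    have hLg₀ : ∀ r > (0:ℝ), Lop (2*p+1) g₀ r = h r := by
      intro r hr
      rw [hg₀, Lop_sum _ _ G hGd r hr]
      have hterm : ∀ i ∈ Finset.range (p+1), Lop (2*p+1) (G i) r =
          a' i * ((2*(p:ℝ) - 2*i) * ladder nexp (i+1) r)
            + b' i * ((2*(p:ℝ) - 2*i) * phi (i+1) r) := by
        intro i _
        show Lop (2*p+1) (fun s => a' i * ladder nexp i s + b' i * phi i s) r = _
        simp only [phi_def]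
        rw [Lop_comb _ (a' i) (b' i) (Der2.ladder nexp_base i) (Der2.ladder exp_base i) r hr,
          Lop_ladder nexp_base p i hr, Lop_ladder exp_base p i hr]
      rw [Finset.sum_congr rfl hterm]
      rw [Finset.sum_range_succ]
      have hlast : a' p * ((2*(p:ℝ) - 2*p) * ladder nexp (p+1) r)
          + b' p * ((2*(p:ℝ) - 2*p) * phi (p+1) r) = 0 := by
        rw [ha', hb']
        simp
      rw [hlast, add_zero]
      have hmid : ∀ i ∈ Finset.range p,
          a' i * ((2*(p:ℝ) - 2*i) * ladder nexp (i+1) r)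
            + b' i * ((2*(p:ℝ) - 2*i) * phi (i+1) r)
          = a (i+1) * ladder nexp (i+1) r + b (i+1) * phi (i+1) r := by
        intro i hi
        have hip : i < p := Finset.mem_range.mp hi
        have hne : (2*(p:ℝ) - 2*i) ≠ 0 := hcoef i hip
        rw [ha', hb']
        simp only [if_pos hip]
        have e : ∀ x y : ℝ, x / (2*(p:ℝ) - 2*i) * ((2*(p:ℝ) - 2*i) * y) = x * y := fun x y => by
          rw [← mul_assoc, div_mul_cancel₀ x hne]
        rw [e, e]
      rw [Finset.sum_congr rfl hmid]
      rw [hrep r hr, Finset.sum_range_succ']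
      have h0 : a 0 = 0 ∧ b 0 = 0 := hz 0 (by omega)
      rw [h0.1, h0.2]
      simp
    -- u = g - g₀ solves Lop u = 0
    set u : ℝ → ℝ := fun s => 1 * g s + (-1) * g₀ s with hu_def
    have hg₀d : Der2 g₀ := by
      rw [hg₀]; exact (der2_sum_full _ G hGd).1
    have hud : Der2 u := (der2_comb_full 1 (-1) hg.der2 hg₀d).1
    have huode : ∀ r > (0:ℝ), Lop (2*p+1) u r = 0 := by
      intro r hr
      rw [hu_def, Lop_comb _ 1 (-1) hg.der2 hg₀d r hr, hLg₀ r hr]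
      have : Lop (2*p+1) g r = h r := rfl
      rw [this]
      ring
    obtain ⟨A, B, hAB⟩ := kernel_single p u (fun r hr => (hud r hr).1)
      (fun r hr => (hud r hr).2) huode
    refine ⟨fun i => a' i + (if i = p then A else 0),
            fun i => b' i + (if i = p then B else 0), ?_, ?_⟩
    · intro i hi
      have hip : i < p := by omega
      have hinep : i ≠ p := by omega
      have hzi : a (i+1) = 0 ∧ b (i+1) = 0 := hz (i+1) (by omega)
      rw [ha', hb']
      simp [hip, hinep, hzi.1, hzi.2]
    · intro r hr
      have hsplit : ∑ i ∈ Finset.range (p+1),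
          ((a' i + (if i = p then A else 0)) * ladder nexp i r
            + (b' i + (if i = p then B else 0)) * phi i r)
          = (∑ i ∈ Finset.range (p+1), G i r)
            + ∑ i ∈ Finset.range (p+1),
              ((if i = p then A else 0) * ladder nexp i r
                + (if i = p then B else 0) * phi i r) := by
        rw [← Finset.sum_add_distrib]
        refine Finset.sum_congr rfl (fun i _ => ?_)
        rw [hG]
        ring
      have hite : ∑ i ∈ Finset.range (p+1),
          ((if i = p then A else 0) * ladder nexp i r
            + (if i = p then B else 0) * phi i r)
          = A * ladder nexp p r + B * phi p r := by
        rw [Finset.sum_eq_single p (fun i _ hip => by simp [hip])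
          (fun hc => absurd (Finset.self_mem_range_succ p) hc)]
        simp
      have := hAB r hr
      rw [hu_def] at this
      have hgr : g r = g₀ r + (A * ladder nexp p r + B * phi p r) := by
        simp only [one_mul, neg_one_mul] at this
        linarith
      rw [hsplit, hite, hgr]

noncomputable def repP (ε : ℝ) : ℕ → Polynomial ℝ
  | 0 => 1
  | i+1 => Polynomial.C (-ε) * Polynomial.X * repP ε i
      + Polynomial.X^3 * Polynomial.derivative (repP ε i)

lemma ladder_rep {f : ℝ → ℝ} (hf : LadderBase f) (ε : ℝ)
    (h0 : ∀ r, f r = Real.exp (ε*r)) :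
    ∀ i, ∀ r > (0:ℝ), ladder f i r = Real.exp (ε*r) * (repP ε i).eval (1/r) := by
  intro i
  induction i with
  | zero =>
    intro r hr
    show f r = _
    rw [h0 r, repP]
    simp
  | succ i ih =>
    intro r hr
    have hr' : r ≠ 0 := ne_of_gt hr
    -- derivative of the representation
    have hexp : HasDerivAt (fun s => Real.exp (ε*s)) (Real.exp (ε*r) * ε) r := by
      simpa using ((hasDerivAt_id r).const_mul ε).exp
    have hpoly : HasDerivAt (fun s : ℝ => (repP ε i).eval s⁻¹)
        ((Polynomial.derivative (repP ε i)).eval r⁻¹ * (-(r^2)⁻¹)) r :=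
      (Polynomial.hasDerivAt (repP ε i) r⁻¹).comp r (hasDerivAt_inv hr')
    have hF : HasDerivAt (fun s => Real.exp (ε*s) * (repP ε i).eval s⁻¹)
        (Real.exp (ε*r) * ε * (repP ε i).eval r⁻¹
          + Real.exp (ε*r) * ((Polynomial.derivative (repP ε i)).eval r⁻¹ * (-(r^2)⁻¹))) r :=
      hexp.mul hpoly
    have heq : ladder f i =ᶠ[nhds r] fun s => Real.exp (ε*s) * (repP ε i).eval s⁻¹ := by
      filter_upwards [Ioi_mem_nhds hr] with s hs
      rw [ih s hs, one_div]
    have hd : deriv (ladder f i) r = Real.exp (ε*r) * ε * (repP ε i).eval r⁻¹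
        + Real.exp (ε*r) * ((Polynomial.derivative (repP ε i)).eval r⁻¹ * (-(r^2)⁻¹)) := by
      rw [Filter.EventuallyEq.deriv_eq heq]
      exact hF.deriv
    show -(deriv (ladder f i) r) / r = _
    rw [hd, repP]
    simp only [Polynomial.eval_add, Polynomial.eval_mul, Polynomial.eval_C, Polynomial.eval_X,
      Polynomial.eval_pow]
    field_simp
    ring

lemma repP_coeff_lt (ε : ℝ) : ∀ i, ∀ k, k < i → (repP ε i).coeff k = 0 := by
  intro i
  induction i with
  | zero => intro k hk; omega
  | succ i ih =>
    intro k hk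
    have hdef : repP ε (i+1) = Polynomial.C (-ε) * Polynomial.X * repP ε i
      + Polynomial.X^3 * Polynomial.derivative (repP ε i) := rfl
    rw [hdef, Polynomial.coeff_add]
    have h1 : (Polynomial.C (-ε) * Polynomial.X * repP ε i).coeff k = 0 := by
      rw [mul_assoc, Polynomial.coeff_C_mul]
      rcases k with _ | k'
      · simp [Polynomial.mul_coeff_zero]
      · rw [Polynomial.coeff_X_mul, ih k' (by omega)]
        ring
    have h2 : (Polynomial.X^3 * Polynomial.derivative (repP ε i)).coeff k = 0 := by
      by_cases h3 : k < 3
      · exact (Polynomial.X_pow_dvd_iff.mp (dvd_mul_right _ _)) k h3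
      · obtain ⟨d, rfl⟩ : ∃ d, k = d + 3 := ⟨k - 3, by omega⟩
        rw [Polynomial.coeff_X_pow_mul, Polynomial.coeff_derivative, ih (d+1) (by omega)]
        ring
    rw [h1, h2, add_zero]

lemma repP_coeff_diag (ε : ℝ) : ∀ i, (repP ε i).coeff i = (-ε)^i := by
  intro i
  induction i with
  | zero =>
    have hdef : repP ε 0 = 1 := rfl
    rw [hdef]
    simp
  | succ i ih =>
    have hdef : repP ε (i+1) = Polynomial.C (-ε) * Polynomial.X * repP ε i
      + Polynomial.X^3 * Polynomial.derivative (repP ε i) := rfl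
    rw [hdef, Polynomial.coeff_add]
    have h1 : (Polynomial.C (-ε) * Polynomial.X * repP ε i).coeff (i+1) = (-ε)^(i+1) := by
      rw [mul_assoc, Polynomial.coeff_C_mul, Polynomial.coeff_X_mul, ih]
      ring
    have h2 : (Polynomial.X^3 * Polynomial.derivative (repP ε i)).coeff (i+1) = 0 := by
      by_cases h3 : i+1 < 3
      · exact (Polynomial.X_pow_dvd_iff.mp (dvd_mul_right _ _)) (i+1) h3
      · obtain ⟨d, hd⟩ : ∃ d, i+1 = d + 3 := ⟨i - 2, by omega⟩
        rw [hd, Polynomial.coeff_X_pow_mul, Polynomial.coeff_derivative,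
          repP_coeff_lt ε i (d+1) (by omega)]
        ring
    rw [h1, h2, add_zero]

lemma tendsto_eval_inv (P : Polynomial ℝ) :
    Filter.Tendsto (fun r : ℝ => P.eval (1/r)) Filter.atTop (nhds (P.eval 0)) := by
  have h1 : Filter.Tendsto (fun r : ℝ => 1/r) Filter.atTop (nhds 0) := by
    simpa [one_div] using
      (tendsto_inv_atTop_zero : Filter.Tendsto (fun r:ℝ => r⁻¹) Filter.atTop (nhds (0:ℝ)))
  exact ((P.continuous_aeval).tendsto 0).comp h1 |>.congr (fun r => by simp)

lemma nexp_eq (r : ℝ) : nexp r = Real.exp ((-1)*r) := by simp [nexp]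
lemma exp_eq (r : ℝ) : Real.exp r = Real.exp ((1:ℝ)*r) := by simp

lemma psi_tendsto (i : ℕ) :
    Filter.Tendsto (fun r => ladder nexp i r) Filter.atTop (nhds 0) := by
  have hrep := ladder_rep nexp_base (-1) nexp_eq i
  have h1 : Filter.Tendsto (fun r : ℝ => Real.exp ((-1)*r) * (repP (-1) i).eval (1/r))
      Filter.atTop (nhds (0 * (repP (-1) i).eval 0)) := by
    apply Filter.Tendsto.mul _ (tendsto_eval_inv _)
    simpa [neg_one_mul] using Real.tendsto_exp_neg_atTop_nhds_zero
  rw [zero_mul] at h1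
  apply h1.congr'
  filter_upwards [Filter.eventually_gt_atTop 0] with r hr
  exact (hrep r hr).symm

lemma psi_decay (i j : ℕ) :
    Filter.Tendsto (fun r => r^j * Real.exp (-r) * ladder nexp i r) Filter.atTop (nhds 0) := by
  have hrep := ladder_rep nexp_base (-1) nexp_eq i
  have h1 : Filter.Tendsto (fun r : ℝ => (r^j * Real.exp (-r)) * (Real.exp ((-1)*r) * (repP (-1) i).eval (1/r)))
      Filter.atTop (nhds (0 * (0 * (repP (-1) i).eval 0))) := by
    refine Filter.Tendsto.mul ?_ (Filter.Tendsto.mul ?_ (tendsto_eval_inv _))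
    · exact Real.tendsto_pow_mul_exp_neg_atTop_nhds_zero j
    · simpa [neg_one_mul] using Real.tendsto_exp_neg_atTop_nhds_zero
  simp only [zero_mul] at h1
  apply h1.congr'
  filter_upwards [Filter.eventually_gt_atTop 0] with r hr
  rw [hrep r hr]

lemma phi_diag (i : ℕ) :
    Filter.Tendsto (fun r => r^i * Real.exp (-r) * phi i r) Filter.atTop (nhds ((-1)^i)) := by
  have hrep := ladder_rep exp_base 1 exp_eq i
  obtain ⟨R, hR⟩ : Polynomial.X^i ∣ repP 1 i :=
    Polynomial.X_pow_dvd_iff.mpr (fun d hd => repP_coeff_lt 1 i d hd)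
  have hR0 : R.eval 0 = (-1)^i := by
    have h1 : (repP 1 i).coeff i = R.coeff 0 := by
      rw [hR]
      simpa using Polynomial.coeff_X_pow_mul R i 0
    have h2 := repP_coeff_diag 1 i
    rw [h1] at h2
    rw [Polynomial.coeff_zero_eq_eval_zero] at h2
    simpa using h2
  have h1 : Filter.Tendsto (fun r : ℝ => R.eval (1/r)) Filter.atTop (nhds ((-1)^i)) := by
    rw [← hR0]
    exact tendsto_eval_inv R
  apply h1.congr'
  filter_upwards [Filter.eventually_gt_atTop 0] with r hr
  have hr' : r ≠ 0 := ne_of_gt hr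
  have hee : Real.exp (-r) * Real.exp ((1:ℝ)*r) = 1 := by
    rw [← Real.exp_add]; simp
  have hpow : r^i * (1/r)^i = 1 := by
    rw [one_div, inv_pow, mul_inv_cancel₀ (pow_ne_zero i hr')]
  rw [phi_def, hrep r hr, hR]
  rw [Polynomial.eval_mul, Polynomial.eval_pow, Polynomial.eval_X, eq_comm]
  calc r ^ i * Real.exp (-r) * (Real.exp (1*r) * ((1/r)^i * R.eval (1/r)))
      = (r^i * (1/r)^i) * ((Real.exp (-r) * Real.exp (1*r)) * R.eval (1/r)) := by ring
    _ = R.eval (1/r) := by rw [hpow, hee]; ring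

lemma phi_offdiag (i j : ℕ) (hij : j < i) :
    Filter.Tendsto (fun r => r^j * Real.exp (-r) * phi i r) Filter.atTop (nhds 0) := by
  have h1 : Filter.Tendsto (fun r : ℝ => (1/r)^(i-j) * (r^i * Real.exp (-r) * phi i r))
      Filter.atTop (nhds (0^(i-j) * (-1)^i)) := by
    refine Filter.Tendsto.mul ?_ (phi_diag i)
    have hbase : Filter.Tendsto (fun r : ℝ => 1/r) Filter.atTop (nhds 0) := by
      simpa [one_div] using
        (tendsto_inv_atTop_zero : Filter.Tendsto (fun r:ℝ => r⁻¹) Filter.atTop (nhds (0:ℝ)))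
    exact hbase.pow _
  rw [zero_pow (by omega), zero_mul] at h1
  apply h1.congr'
  filter_upwards [Filter.eventually_gt_atTop 0] with r hr
  have hr' : r ≠ 0 := ne_of_gt hr
  have hsplit : r^i = r^j * r^(i-j) := by
    rw [← pow_add]
    congr 1
    omega
  have hp : (r^(i-j)) ≠ 0 := pow_ne_zero _ hr'
  rw [hsplit, one_div, inv_pow]
  rw [show (r^(i-j))⁻¹ * (r^j * r^(i-j) * Real.exp (-r) * phi i r) = (r^(i-j))⁻¹ * r^(i-j) * (r^j * Real.exp (-r) * phi i r) by ring, inv_mul_cancel₀ hp, one_mul]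

lemma coeffs_vanish (p : ℕ) (b : ℕ → ℝ)
    (h : Filter.Tendsto (fun r => ∑ i ∈ Finset.range (p+1), b i * phi i r)
      Filter.atTop (nhds 0)) :
    ∀ j, j < p+1 → b j = 0 := by
  intro j
  induction j using Nat.strong_induction_on with
  | _ j ih =>
    intro hj
    -- limit of r^j e^{-r} * F
    have hw : Filter.Tendsto (fun r : ℝ => r^j * Real.exp (-r)) Filter.atTop (nhds 0) :=
      Real.tendsto_pow_mul_exp_neg_atTop_nhds_zero j
    have hlim0 : Filter.Tendsto
        (fun r => ∑ i ∈ Finset.range (p+1), b i * (r^j * Real.exp (-r) * phi i r))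
        Filter.atTop (nhds 0) := by
      have := hw.mul h
      rw [mul_zero] at this
      apply this.congr
      intro r
      rw [Finset.mul_sum]
      exact Finset.sum_congr rfl (fun i _ => by ring)
    have hlim1 : Filter.Tendsto
        (fun r => ∑ i ∈ Finset.range (p+1), b i * (r^j * Real.exp (-r) * phi i r))
        Filter.atTop
        (nhds (∑ i ∈ Finset.range (p+1), if i = j then b j * (-1)^j else 0)) := by
      apply tendsto_finset_sum
      intro i hi
      rcases lt_trichotomy i j with hij | hij | hij
      · have hbz : b i = 0 := ih i hij (by omega)
        have : (if i = j then b j * (-1)^j else 0) = (0:ℝ) := by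
          rw [if_neg (by omega)]
        rw [this, hbz]
        simpa using tendsto_const_nhds
      · subst hij
        rw [if_pos rfl]
        exact (phi_diag i).const_mul (b i)
      · have : (if i = j then b j * (-1)^j else 0) = (0:ℝ) := by
          rw [if_neg (by omega)]
        rw [this]
        have := (phi_offdiag i j hij).const_mul (b i)
        rwa [mul_zero] at this
    have hsum : (∑ i ∈ Finset.range (p+1), if i = j then b j * (-1)^j else 0)
        = b j * (-1)^j := by
      rw [Finset.sum_ite_eq' (Finset.range (p+1)) j (fun _ => b j * (-1)^j),
        if_pos (Finset.mem_range.mpr hj)]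
    rw [hsum] at hlim1
    have := tendsto_nhds_unique hlim1 hlim0
    have hpow : ((-1:ℝ))^j ≠ 0 := by
      apply pow_ne_zero
      norm_num
    exact (mul_eq_zero.mp this).resolve_right hpow

theorem decaying_solutions_span (p : ℕ) (g : ℝ → ℝ)
    (hg : ContDiffOn ℝ (⊤ : ℕ∞) g (Set.Ioi 0))
    (hsol : ∀ r : ℝ, 0 < r → (Lop (2 * p + 1))^[p + 1] g r = 0)
    (hdecay : Filter.Tendsto g Filter.atTop (nhds 0)) :
    ∃ a : Fin (p + 1) → ℝ, ∀ r : ℝ, 0 < r →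
      g r = ∑ i : Fin (p + 1), a i * psi i r := by
  have hNice : Nice g := fun k => hg.of_le (by exact_mod_cast le_top)
  obtain ⟨a, b, -, hrep⟩ := structure_lemma p p le_rfl g hNice hsol
  have hsum_psi : Filter.Tendsto (fun r => ∑ i ∈ Finset.range (p+1), a i * ladder nexp i r)
      Filter.atTop (nhds 0) := by
    have : Filter.Tendsto (fun r => ∑ i ∈ Finset.range (p+1), a i * ladder nexp i r)
        Filter.atTop (nhds (∑ i ∈ Finset.range (p+1), (0:ℝ))) := by
      apply tendsto_finset_sum
      intro i _
      have := (psi_tendsto i).const_mul (a i)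
      rwa [mul_zero] at this
    simpa using this
  have hF : Filter.Tendsto (fun r => ∑ i ∈ Finset.range (p+1), b i * phi i r)
      Filter.atTop (nhds 0) := by
    have hdiff := hdecay.sub hsum_psi
    rw [sub_zero] at hdiff
    apply hdiff.congr'
    filter_upwards [Filter.eventually_gt_atTop 0] with r hr
    rw [hrep r hr, Finset.sum_add_distrib]
    ring
  have hb := coeffs_vanish p b hF
  refine ⟨fun i => a i.val, ?_⟩
  intro r hr
  rw [hrep r hr, Fin.sum_univ_eq_sum_range (fun n => a n * psi n r) (p+1)]
  refine Finset.sum_congr rfl (fun i hi => ?_)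
  rw [hb i (Finset.mem_range.mp hi), zero_mul, add_zero, psi_eq_ladder]
end

section
/- For every i ≥ 0 and every r > 0, ψ_i(r) = exp(−r)·r^{−2i}·χ_i(r), where χ_i(r) denotes the evaluation of the polynomial χ_i at r; in particular e^r·r^{2i}·ψ_i(r) is a polynomial function of r. -/
/-- The reverse Bessel polynomials, defined by `χ_0 = 1`, `χ_1 = X` and
`χ_{i+2} = X²·χ_i + (2i+1)·χ_{i+1}`. -/
noncomputable def chi : ℕ → Polynomial ℝ
  | 0 => 1
  | 1 => Polynomial.X
  | i + 2 => Polynomial.X ^ 2 * chi i + Polynomial.C (2 * (i : ℝ) + 1) * chi (i + 1)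

open Polynomial in
lemma chi_deriv : ∀ i : ℕ, X * (chi i).derivative = (X + C (2 * (i : ℝ))) * chi i - chi (i + 1) := by
  intro i
  induction i using Nat.strong_induction_on with
  | _ i ih =>
    match i with
    | 0 => simp [chi]
    | 1 =>
      have e : chi 2 = X ^ 2 * chi 0 + C (2 * ((0:ℕ) : ℝ) + 1) * chi 1 := rfl
      rw [show (1:ℕ)+1 = 2 from rfl, e]
      simp [chi, map_ofNat]
      ring
    | (n+2) =>
      have h1 := ih n (by omega)
      have h2 := ih (n+1) (by omega)
      have e2 : chi (n+2) = X ^ 2 * chi n + C (2 * (n : ℝ) + 1) * chi (n + 1) := rfl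
      have e3 : chi (n+2+1) = X ^ 2 * chi (n+1) + C (2 * ((n+1:ℕ):ℝ) + 1) * chi (n + 2) := rfl
      have e2' : chi (n+1+1) = X ^ 2 * chi n + C (2 * (n : ℝ) + 1) * chi (n + 1) := e2
      rw [e3, e2]
      rw [e2'] at h2
      simp only [derivative_add, derivative_mul, derivative_C, derivative_X_pow, derivative_X,
        derivative_natCast, derivative_ofNat, derivative_one,
        map_add, map_mul, map_ofNat, map_one, map_natCast] at h1 h2 ⊢
      push_cast at h1 h2 ⊢
      linear_combination (X:Polynomial ℝ)^2 * h1 + (2*((n:ℕ):Polynomial ℝ)+1) * h2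

lemma psi_eq_chi_aux : ∀ i : ℕ, ∀ r : ℝ, 0 < r →
    psi i r = Real.exp (-r) * r ^ (-(2 * (i : ℤ))) * (chi i).eval r := by
  intro i
  induction i with
  | zero => intro r hr; simp [psi, chi]
  | succ i ih =>
    intro r hr
    have hr0 : r ≠ 0 := hr.ne'
    -- the model function for psi i
    set g : ℝ → ℝ := fun x => Real.exp (-x) * x ^ (-(2 * (i : ℤ))) * (chi i).eval x with hg
    have hev : psi i =ᶠ[nhds r] g := by
      filter_upwards [IsOpen.mem_nhds isOpen_Ioi hr] with x hx
      exact ih x hx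
    have h1 : HasDerivAt (fun x : ℝ => Real.exp (-x)) (-Real.exp (-r)) r := by
      simpa using (hasDerivAt_neg r).exp
    have h2 : HasDerivAt (fun x : ℝ => x ^ (-(2 * (i : ℤ))))
        ((((-(2 * (i : ℤ))) : ℤ) : ℝ) * r ^ (-(2 * (i : ℤ)) - 1)) r :=
      hasDerivAt_zpow _ _ (Or.inl hr0)
    have h3 : HasDerivAt (fun x : ℝ => (chi i).eval x) ((chi i).derivative.eval r) r :=
      (chi i).hasDerivAt r
    have hd : HasDerivAt g
        ((-Real.exp (-r) * r ^ (-(2 * (i : ℤ))) +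
          Real.exp (-r) * ((((-(2 * (i : ℤ))) : ℤ) : ℝ) * r ^ (-(2 * (i : ℤ)) - 1))) * (chi i).eval r
          + Real.exp (-r) * r ^ (-(2 * (i : ℤ))) * (chi i).derivative.eval r) r :=
      (h1.mul h2).mul h3
    have hderiv : deriv (psi i) r =
        (-Real.exp (-r) * r ^ (-(2 * (i : ℤ))) +
          Real.exp (-r) * ((((-(2 * (i : ℤ))) : ℤ) : ℝ) * r ^ (-(2 * (i : ℤ)) - 1))) * (chi i).eval r
          + Real.exp (-r) * r ^ (-(2 * (i : ℤ))) * (chi i).derivative.eval r := by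
      rw [hev.deriv_eq]; exact hd.deriv
    show -(deriv (psi i) r) / r = _
    rw [hderiv]
    -- polynomial identity evaluated at r
    have hp := congrArg (Polynomial.eval r) (chi_deriv i)
    simp only [Polynomial.eval_mul, Polynomial.eval_add, Polynomial.eval_sub, Polynomial.eval_X,
      Polynomial.eval_C] at hp
    -- rewrite zpow in terms of natural powers
    have z1 : r ^ (-(2 * (i : ℤ))) = (r ^ (2 * i))⁻¹ := by
      rw [zpow_neg]
      norm_cast
    have z2 : r ^ (-(2 * (i : ℤ)) - 1) = (r ^ (2 * i))⁻¹ * r⁻¹ := by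
      rw [show -(2 * (i : ℤ)) - 1 = -(2 * i + 1 : ℕ) by push_cast; ring, zpow_neg]
      rw [zpow_natCast, pow_succ, mul_inv]
    have z3 : r ^ (-(2 * ((i:ℕ)+1 : ℤ))) = (r ^ (2 * i))⁻¹ * r⁻¹ * r⁻¹ := by
      rw [show -(2 * ((i:ℕ)+1 : ℤ)) = -(2 * i + 2 : ℕ) by push_cast; ring, zpow_neg]
      rw [zpow_natCast, pow_succ, pow_succ, mul_inv, mul_inv]
    push_cast
    rw [z1, z2, z3]
    have hpow : r ^ (2 * i) ≠ 0 := pow_ne_zero _ hr0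
    field_simp
    linear_combination -hp

theorem psi_eq_chi (i : ℕ) (r : ℝ) (hr : 0 < r) :
    psi i r = Real.exp (-r) * r ^ (-(2 * (i : ℤ))) * (chi i).eval r := by
  exact psi_eq_chi_aux i r hr
end

section
/- For every i ≥ 0 and every R > 0, ∫_{R}^{∞} exp(−r)·χ_i(r) dr = exp(−R)·χ_{i+1}(R)/R. -/
open MeasureTheory

open Polynomial Filter in
lemma chiQ : ∀ i : ℕ, chi (i + 1)
    = (Polynomial.X + Polynomial.C (2 * (i : ℝ))) * chi i
      - Polynomial.X * (chi i).derivative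
  | 0 => by simp [chi]
  | 1 => by
    show chi 2 = _
    rw [chi]
    simp only [chi, map_add, map_mul, map_ofNat, Polynomial.C_1, Nat.cast_zero, Nat.cast_one, map_zero, map_one,
      derivative_X]
    ring
  | (i + 2) => by
    have h1 := chiQ i
    have h2 : chi (i + 2)
        = (Polynomial.X + Polynomial.C (2 * ((i : ℝ) + 1))) * chi (i + 1)
          - Polynomial.X * (chi (i + 1)).derivative := by
      have := chiQ (i + 1)
      push_cast at this
      exact this
    show chi (i + 1 + 2) = _
    rw [chi] at h2
    rw [chi]
    simp only [show i + 1 + 1 = i + 2 from rfl]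
    rw [chi]
    simp only [derivative_add, derivative_mul, derivative_C, derivative_X_pow, derivative_X]
    push_cast
    simp only [map_add, map_mul, map_ofNat, Polynomial.C_1] at h1 h2 ⊢
    linear_combination (Polynomial.X ^ 2 : ℝ[X]) * h1
      + ((2 : ℝ[X]) * Polynomial.C (i : ℝ) + 1) * h2

lemma chiP (i : ℕ) :
    (Polynomial.X + 1) * chi (i + 1) - Polynomial.X * (chi (i + 1)).derivative
      = Polynomial.X ^ 2 * chi i := by
  have h := chiQ (i + 1)
  push_cast at h
  have hr : chi (i + 2) = Polynomial.X ^ 2 * chi i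
      + Polynomial.C (2 * (i : ℝ) + 1) * chi (i + 1) := by rw [chi]
  rw [show i + 1 + 1 = i + 2 from rfl, hr] at h
  simp only [map_add, map_mul, map_ofNat, Polynomial.C_1] at h ⊢
  linear_combination -h

lemma chi_nonneg : ∀ i : ℕ, ∀ x : ℝ, 0 ≤ x → 0 ≤ (chi i).eval x
  | 0, x, hx => by simp [chi]
  | 1, x, hx => by simpa [chi] using hx
  | (i + 2), x, hx => by
    rw [chi]
    simp only [Polynomial.eval_add, Polynomial.eval_mul, Polynomial.eval_pow,
      Polynomial.eval_X, Polynomial.eval_C]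
    have := chi_nonneg i x hx
    have := chi_nonneg (i + 1) x hx
    positivity

open Polynomial Filter in
theorem integral_exp_chi (i : ℕ) (R : ℝ) (hR : 0 < R) :
    ∫ r in Set.Ioi R, Real.exp (-r) * (chi i).eval r
      = Real.exp (-R) * (chi (i + 1)).eval R / R := by
  set g : ℝ → ℝ := fun x => -(Real.exp (-x) * (chi (i + 1)).eval x / x) with hg
  have hderiv : ∀ x ∈ Set.Ici R, HasDerivAt g (Real.exp (-x) * (chi i).eval x) x := by
    intro x hx
    have hx0 : x ≠ 0 := (lt_of_lt_of_le hR hx).ne'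
    have h1 : HasDerivAt (fun x : ℝ => Real.exp (-x)) (Real.exp (-x) * (-1)) x :=
      (Real.hasDerivAt_exp (-x)).comp x ((hasDerivAt_id x).neg)
    have h2 : HasDerivAt (fun x : ℝ => (chi (i + 1)).eval x)
        ((chi (i + 1)).derivative.eval x) x := (chi (i + 1)).hasDerivAt x
    have h3 := ((h1.mul h2).div (hasDerivAt_id x) hx0).neg
    refine h3.congr_deriv ?_
    have hP := chiP i
    have hPx := congrArg (Polynomial.eval x) hP
    simp only [Polynomial.eval_add, Polynomial.eval_sub, Polynomial.eval_mul,
      Polynomial.eval_pow, Polynomial.eval_X, Polynomial.eval_one] at hPx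
    simp only [id, Pi.mul_apply]
    field_simp
    linear_combination hPx
  have hlim : Filter.Tendsto g Filter.atTop (nhds 0) := by
    have h := ((chi (i + 1)).tendsto_div_exp_atTop.mul tendsto_inv_atTop_zero).neg
    rw [mul_zero, neg_zero] at h
    refine h.congr fun x => ?_
    simp only [hg, Real.exp_neg]
    ring
  have key := integral_Ioi_of_hasDerivAt_of_nonneg' (g' := fun x => Real.exp (-x) * (chi i).eval x)
    hderiv (fun x hx => mul_nonneg (Real.exp_pos _).le
      (chi_nonneg i x (le_of_lt (lt_trans hR hx)))) hlim
  rw [key, hg]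
  ring
end

section
/- Let p ≥ 0, R > 0, and let α_0, …, α_p be real numbers; set g(r) = Σ_{i=0}^{p} α_i·ψ_i(r). Then the following are equivalent: (1) g(R) = 1 and the k-th derivative g^{(k)}(R) = 0 for every k with 1 ≤ k ≤ p; (2) Σ_{i=0}^{p} α_i·ψ_{i+j}(R) = δ_{0j} for every j with 0 ≤ j ≤ p (i.e. the sum equals 1 when j = 0 and 0 when 1 ≤ j ≤ p). -/
open Polynomial Finset
open scoped ContDiff

lemma psi_contDiffOn (i : ℕ) : ContDiffOn ℝ ∞ (psi i) (Set.Ioi 0) := by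
  induction i with
  | zero => exact (Real.contDiff_exp.comp contDiff_neg).contDiffOn
  | succ i ih =>
    have hd : ContDiffOn ℝ ∞ (deriv (psi i)) (Set.Ioi 0) :=
      ((contDiffOn_infty_iff_deriv_of_isOpen isOpen_Ioi).1 ih).2
    exact hd.neg.div contDiffOn_id (fun x hx => ne_of_gt hx)

lemma psi_differentiableAt (i : ℕ) {r : ℝ} (hr : 0 < r) :
    DifferentiableAt ℝ (psi i) r :=
  (((psi_contDiffOn i).contDiffAt (Ioi_mem_nhds hr)).differentiableAt
    (by simp))

lemma deriv_psi (i : ℕ) {r : ℝ} (hr : 0 < r) :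
    deriv (psi i) r = -r * psi (i + 1) r := by
  have h : psi (i + 1) r = -(deriv (psi i) r) / r := rfl
  rw [h]
  field_simp

lemma hasDerivAt_psi (i : ℕ) {r : ℝ} (hr : 0 < r) :
    HasDerivAt (psi i) (-r * psi (i + 1) r) r := by
  rw [← deriv_psi i hr]
  exact (psi_differentiableAt i hr).hasDerivAt

noncomputable def Ssum (p : ℕ) (α : Fin (p + 1) → ℝ) (j : ℕ) (r : ℝ) : ℝ :=
  ∑ i : Fin (p + 1), α i * psi ((i : ℕ) + j) r

lemma hasDerivAt_Ssum (p : ℕ) (α : Fin (p + 1) → ℝ) (j : ℕ) {r : ℝ} (hr : 0 < r) :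
    HasDerivAt (Ssum p α j) (-r * Ssum p α (j + 1) r) r := by
  have h : HasDerivAt (fun x => ∑ i : Fin (p + 1), α i * psi ((i : ℕ) + j) x)
      (∑ i : Fin (p + 1), α i * (-r * psi ((i : ℕ) + j + 1) r)) r :=
    HasDerivAt.fun_sum fun i _ => (hasDerivAt_psi ((i : ℕ) + j) hr).const_mul (α i)
  have he : (∑ i : Fin (p + 1), α i * (-r * psi ((i : ℕ) + j + 1) r))
      = -r * Ssum p α (j + 1) r := by
    rw [Ssum, Finset.mul_sum]
    exact Finset.sum_congr rfl fun i _ => by ring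
  rw [← he]
  exact h

/-- Coefficient polynomials. -/
noncomputable def psiC : ℕ → ℕ → Polynomial ℝ
  | 0, 0 => 1
  | 0, _ + 1 => 0
  | k + 1, 0 => (psiC k 0).derivative
  | k + 1, j + 1 => (psiC k (j + 1)).derivative - X * psiC k j

lemma psiC_zero_of_lt : ∀ k j : ℕ, k < j → psiC k j = 0
  | 0, _ + 1, _ => rfl
  | k + 1, j + 1, h => by
    have h1 : psiC k (j + 1) = 0 := psiC_zero_of_lt k (j + 1) (Nat.lt_of_succ_lt h)
    have h2 : psiC k j = 0 := psiC_zero_of_lt k j (Nat.lt_of_succ_lt_succ h)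
    show (psiC k (j + 1)).derivative - X * psiC k j = 0
    rw [h1, h2]; simp

lemma psiC_diag : ∀ k : ℕ, psiC k k = (-X) ^ k
  | 0 => by simp [psiC]
  | k + 1 => by
    show (psiC k (k + 1)).derivative - X * psiC k k = (-X) ^ (k + 1)
    rw [psiC_zero_of_lt k (k + 1) (lt_add_one k), psiC_diag k]
    simp; ring

lemma psiC_zero_col : ∀ k : ℕ, 1 ≤ k → psiC k 0 = 0
  | 1, _ => by
    show (psiC 0 0).derivative = 0
    simp [psiC]
  | k + 2, _ => by
    show (psiC (k + 1) 0).derivative = 0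
    rw [psiC_zero_col (k + 1) (Nat.succ_le_succ (Nat.zero_le k))]
    simp

lemma iteratedDeriv_Ssum (p : ℕ) (α : Fin (p + 1) → ℝ) (k : ℕ) :
    ∀ r ∈ Set.Ioi (0 : ℝ),
      iteratedDeriv k (Ssum p α 0) r
        = ∑ j ∈ Finset.range (k + 1), (psiC k j).eval r * Ssum p α j r := by
  induction k with
  | zero =>
    intro r _
    simp [psiC, iteratedDeriv_zero]
  | succ k ih =>
    intro r hr
    rw [iteratedDeriv_succ]
    have hderiveq : deriv (iteratedDeriv k (Ssum p α 0)) r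
        = deriv (fun x => ∑ j ∈ Finset.range (k + 1), (psiC k j).eval x * Ssum p α j x) r := by
      apply Filter.EventuallyEq.deriv_eq
      exact Filter.eventuallyEq_of_mem (isOpen_Ioi.mem_nhds hr) ih
    rw [hderiveq]
    have hD : HasDerivAt (fun x => ∑ j ∈ Finset.range (k + 1), (psiC k j).eval x * Ssum p α j x)
        (∑ j ∈ Finset.range (k + 1),
          ((psiC k j).derivative.eval r * Ssum p α j r
            + (psiC k j).eval r * (-r * Ssum p α (j + 1) r))) r :=
      HasDerivAt.fun_sum fun j _ =>
        ((psiC k j).hasDerivAt r).mul (hasDerivAt_Ssum p α j hr)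
    rw [hD.deriv]
    have hCk1 : psiC k (k + 1) = 0 := psiC_zero_of_lt k (k + 1) (lt_add_one k)
    have hsucc : ∀ j : ℕ, psiC (k + 1) (j + 1) = (psiC k (j + 1)).derivative - X * psiC k j :=
      fun j => rfl
    have hzero : psiC (k + 1) 0 = (psiC k 0).derivative := rfl
    conv_rhs => rw [Finset.sum_range_succ']
    simp only [hsucc, hzero, eval_sub, eval_mul, eval_X]
    rw [Finset.sum_add_distrib,
      Finset.sum_range_succ' (fun j => (psiC k j).derivative.eval r * Ssum p α j r) k]
    have h1 : ∑ j ∈ Finset.range k, (psiC k (j + 1)).derivative.eval r * Ssum p α (j + 1) r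
        = ∑ j ∈ Finset.range (k + 1), (psiC k (j + 1)).derivative.eval r * Ssum p α (j + 1) r := by
      rw [Finset.sum_range_succ, hCk1]
      simp
    rw [h1, add_right_comm, ← Finset.sum_add_distrib]
    congr 1
    exact Finset.sum_congr rfl fun j _ => by ring

theorem boundary_conditions_iff (p : ℕ) (R : ℝ) (hR : 0 < R) (α : Fin (p + 1) → ℝ) :
    ((∑ i : Fin (p + 1), α i * psi i R) = 1 ∧
      ∀ k : ℕ, 1 ≤ k → k ≤ p →
        iteratedDeriv k (fun r => ∑ i : Fin (p + 1), α i * psi i r) R = 0)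
    ↔ (∀ j : ℕ, j ≤ p →
        (∑ i : Fin (p + 1), α i * psi ((i : ℕ) + j) R) = if j = 0 then 1 else 0) := by
  have hg : (fun r => ∑ i : Fin (p + 1), α i * psi i r) = Ssum p α 0 := rfl
  have hRmem : R ∈ Set.Ioi (0 : ℝ) := Set.mem_Ioi.mpr hR
  constructor
  · rintro ⟨h1, h2⟩ j
    induction j using Nat.strong_induction_on with
    | _ j ih =>
      intro hj
      match j with
      | 0 => simpa [Ssum] using h1
      | m + 1 =>
        have hd : iteratedDeriv (m + 1) (Ssum p α 0) R = 0 := by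
          rw [← hg]; exact h2 (m + 1) (Nat.succ_le_succ (Nat.zero_le m)) hj
        rw [iteratedDeriv_Ssum p α (m + 1) R hRmem, Finset.sum_range_succ] at hd
        have hz : ∑ t ∈ Finset.range (m + 1), (psiC (m + 1) t).eval R * Ssum p α t R = 0 := by
          apply Finset.sum_eq_zero
          intro t ht
          rcases Nat.eq_zero_or_pos t with h0 | h0
          · subst h0
            rw [psiC_zero_col (m + 1) (Nat.succ_le_succ (Nat.zero_le m))]
            simp
          · have htm : t < m + 1 := Finset.mem_range.mp ht
            have htp : t ≤ p := le_trans (Nat.le_of_lt_succ htm) (Nat.le_of_succ_le hj)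
            have hs : Ssum p α t R = 0 := by
              have := ih t htm htp
              simpa [Ssum, Nat.pos_iff_ne_zero.mp h0] using this
            rw [hs, mul_zero]
        rw [hz, zero_add, psiC_diag] at hd
        simp only [eval_pow, eval_neg, eval_X] at hd
        have hne : (-R) ^ (m + 1) ≠ 0 := pow_ne_zero _ (by linarith)
        have : Ssum p α (m + 1) R = 0 := by
          rcases mul_eq_zero.mp hd with h | h
          · exact absurd h hne
          · exact h
        simpa [Ssum] using this
  · intro h
    constructor
    · have := h 0 (Nat.zero_le p)
      simpa [Ssum] using this
    · intro k hk1 hkp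
      rw [hg, iteratedDeriv_Ssum p α k R hRmem]
      apply Finset.sum_eq_zero
      intro j hj
      rcases Nat.eq_zero_or_pos j with h0 | h0
      · subst h0
        rw [psiC_zero_col k hk1]
        simp
      · have hjp : j ≤ p := le_trans (Nat.le_of_lt_succ (Finset.mem_range.mp hj)) hkp
        have hs : Ssum p α j R = 0 := by
          have := h j hjp
          simpa [Ssum, Nat.pos_iff_ne_zero.mp h0] using this
        rw [hs, mul_zero]
end

section
/- For every p ≥ 0, the 2(p+1) functions ψ_0, …, ψ_p, ψ̄_0, …, ψ̄_p, regarded as real-valued functions on (0,∞), are linearly independent over ℝ. -/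
/-- The sequence of functions `ψ̄_i : ℝ → ℝ` defined inductively by
`ψ̄_0(r) = exp(r)` and `ψ̄_{i+1}(r) = −ψ̄_i'(r)/r`. -/
noncomputable def psibar : ℕ → ℝ → ℝ
  | 0 => fun r => Real.exp r
  | i + 1 => fun r => -(deriv (psibar i) r) / r

open Polynomial Filter Real in
noncomputable def myP (ε : ℝ) : ℕ → Polynomial ℝ
  | 0 => 1
  | (i+1) => C (2*i : ℝ) * myP ε i - C ε * (X * myP ε i) - X * derivative (myP ε i)

open Polynomial Filter Real

lemma myP_natDegree_le (ε : ℝ) (i : ℕ) : (myP ε i).natDegree ≤ i := by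
  induction i with
  | zero => simp [myP]
  | succ j ih =>
    rw [myP]
    refine le_trans (natDegree_sub_le _ _) (max_le (le_trans (natDegree_sub_le _ _) (max_le ?_ ?_)) ?_)
    · exact le_trans (natDegree_C_mul_le _ _) (by omega)
    · refine le_trans (natDegree_C_mul_le _ _) (le_trans natDegree_mul_le ?_)
      have := natDegree_X_le (R := ℝ); omega
    · refine le_trans natDegree_mul_le ?_
      have h1 := natDegree_derivative_le (myP ε j)
      have := natDegree_X_le (R := ℝ); omega

lemma myP_coeff (ε : ℝ) (i : ℕ) : (myP ε i).coeff i = (-ε)^i := by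
  induction i with
  | zero => simp [myP]
  | succ j ih =>
    rw [myP]
    have h1 : (myP ε j).coeff (j+1) = 0 :=
      coeff_eq_zero_of_natDegree_lt (lt_of_le_of_lt (myP_natDegree_le ε j) (by omega))
    have h2 : (derivative (myP ε j)).coeff j = (j+1) * (myP ε j).coeff (j+1) := by
      rw [coeff_derivative]; push_cast; ring
    simp only [coeff_sub, coeff_C_mul, coeff_X_mul, h1, h2, ih]
    ring

lemma myP_coeff_ne (ε : ℝ) (hε : ε ≠ 0) (i : ℕ) : (myP ε i).coeff i ≠ 0 := by
  rw [myP_coeff]; exact pow_ne_zero _ (neg_ne_zero.mpr hε)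

lemma key_s17 (ε : ℝ) (f : ℕ → ℝ → ℝ) (h0 : ∀ r, f 0 r = Real.exp (ε * r))
    (hrec : ∀ i r, f (i+1) r = -(deriv (f i) r) / r) (i : ℕ) :
    ∀ r, 0 < r → f i r = Real.exp (ε * r) * (myP ε i).eval r / r ^ (2*i) := by
  induction i with
  | zero => intro r hr; simp [h0, myP]
  | succ j ih =>
    intro r hr
    have hne : r ≠ 0 := hr.ne'
    have hd : HasDerivAt (fun s : ℝ => Real.exp (ε * s) * (myP ε j).eval s / s ^ (2*j))
        (((Real.exp (ε*r) * ε * (myP ε j).eval r + Real.exp (ε*r) * (derivative (myP ε j)).eval r) * r^(2*j)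
          - Real.exp (ε*r) * (myP ε j).eval r * ((2*j : ℕ) * r^(2*j-1))) / (r^(2*j))^2) r := by
      have := ((((hasDerivAt_id r).const_mul ε).exp).mul ((myP ε j).hasDerivAt r)).div
        (hasDerivAt_pow (2*j) r) (pow_ne_zero _ hne)
      refine this.congr_deriv ?_
      simp only [id, Pi.mul_apply]
      ring
    have hev : deriv (f j) r = ((Real.exp (ε*r) * ε * (myP ε j).eval r + Real.exp (ε*r) * (derivative (myP ε j)).eval r) * r^(2*j)
          - Real.exp (ε*r) * (myP ε j).eval r * ((2*j : ℕ) * r^(2*j-1))) / (r^(2*j))^2 := by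
      have hEq : f j =ᶠ[nhds r] fun s => Real.exp (ε * s) * (myP ε j).eval s / s ^ (2*j) :=
        Filter.eventuallyEq_of_mem (Ioi_mem_nhds hr) (fun s hs => ih s hs)
      rw [hEq.deriv_eq, hd.deriv]
    rw [hrec, hev, myP]
    simp only [eval_sub, eval_mul, eval_C, eval_X]
    rcases j with _ | k
    · push_cast
      field_simp
      ring
    · have e1 : 2*(k+1) = 2*k+2 := by ring
      have e2 : 2*k+2-1 = 2*k+1 := by omega
      have e3 : 2*(k+1+1) = 2*k+4 := by ring
      rw [e1, e2, e3]
      push_cast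
      field_simp
      ring

lemma coeffs_zero (ε : ℝ) (hε : ε ≠ 0) (p : ℕ) (c : Fin (p+1) → ℝ)
    (h : ∑ i : Fin (p+1), C (c i) * (X^(2*(p - i.val)) * myP ε i.val) = 0) :
    ∀ i, c i = 0 := by
  have H : ∀ n : ℕ, ∀ i : Fin (p+1), i.val = n → c i = 0 := by
    intro n
    induction n using Nat.strong_induction_on with
    | _ n IH =>
      intro i hi
      have hcoeff := congrArg (fun q => Polynomial.coeff q (2*p - n)) h
      simp only [finset_sum_coeff, coeff_zero] at hcoeff
      rw [Finset.sum_eq_single i] at hcoeff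
      · -- main term
        have hip : i.val ≤ p := Nat.lt_succ_iff.mp i.isLt
        have e1 : 2*p - n = i.val + 2*(p - i.val) := by omega
        rw [coeff_C_mul, e1, coeff_X_pow_mul, myP_coeff] at hcoeff
        have := pow_ne_zero i.val (neg_ne_zero.mpr hε)
        exact (mul_eq_zero.mp hcoeff).resolve_right this
      · intro j _ hji
        rcases lt_trichotomy j.val n with hlt | heq | hgt
        · rw [IH j.val (by omega) j rfl]; simp
        · exact absurd (Fin.ext (hi ▸ heq) : j = i) hji
        · have hjp : j.val ≤ p := Nat.lt_succ_iff.mp j.isLt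
          have hnp : n ≤ p := by omega
          have hdeg : (C (c j) * (X^(2*(p - j.val)) * myP ε j.val)).natDegree < 2*p - n := by
            refine lt_of_le_of_lt (natDegree_C_mul_le _ _) (lt_of_le_of_lt natDegree_mul_le ?_)
            have h1 := myP_natDegree_le ε j.val
            have h2 : (X^(2*(p - j.val)) : Polynomial ℝ).natDegree ≤ 2*(p-j.val) :=
              le_of_eq (natDegree_X_pow _)
            omega
          rw [coeff_eq_zero_of_natDegree_lt hdeg]
      · intro hni; exact absurd (Finset.mem_univ i) hni
  intro i; exact H i.val i rfl

theorem psi_psibar_linearIndependent (p : ℕ) :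
    LinearIndependent ℝ
      (fun k : Fin (p + 1) ⊕ Fin (p + 1) =>
        Sum.elim
          (fun i : Fin (p + 1) => (Set.Ioi (0 : ℝ)).restrict (psi i))
          (fun i : Fin (p + 1) => (Set.Ioi (0 : ℝ)).restrict (psibar i)) k) := by
  rw [Fintype.linearIndependent_iff]
  intro g hg
  set c : Fin (p+1) → ℝ := fun i => g (Sum.inl i) with hc
  set d : Fin (p+1) → ℝ := fun i => g (Sum.inr i) with hd
  have hpsi := key_s17 (-1) psi (fun r => by simp [psi]) (fun i r => rfl)
  have hpsibar := key_s17 1 psibar (fun r => by simp [psibar]) (fun i r => rfl)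
  set A : Polynomial ℝ := ∑ i : Fin (p+1), C (c i) * (X^(2*(p - i.val)) * myP (-1) i.val) with hA
  set B : Polynomial ℝ := ∑ i : Fin (p+1), C (d i) * (X^(2*(p - i.val)) * myP 1 i.val) with hB
  have hpt : ∀ r : ℝ, (hr : 0 < r) →
      (∑ i : Fin (p+1), c i * psi i.val r) + (∑ i : Fin (p+1), d i * psibar i.val r) = 0 := by
    intro r hr
    have := congrFun hg ⟨r, hr⟩
    simp only [Finset.sum_apply, Pi.smul_apply, Pi.zero_apply, smul_eq_mul,
      Fintype.sum_sum_type, Sum.elim_inl, Sum.elim_inr, Set.restrict_apply] at this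
    exact this
  have hAB : ∀ r : ℝ, 0 < r → Real.exp (-r) * A.eval r + Real.exp r * B.eval r = 0 := by
    intro r hr
    have hne : r ≠ 0 := hr.ne'
    have key1 : ∀ i : Fin (p+1),
        Real.exp (-r) * (c i * (r^(2*(p - i.val)) * (myP (-1) i.val).eval r))
          = r^(2*p) * (c i * psi i.val r) := by
      intro i
      rw [hpsi i.val r hr]
      have hip : i.val ≤ p := Nat.lt_succ_iff.mp i.isLt
      have e1 : 2*(p - i.val) + 2*i.val = 2*p := by omega
      have : (r:ℝ)^(2*p) = r^(2*(p-i.val)) * r^(2*i.val) := by rw [← pow_add, e1]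
      rw [this]
      have h2 : Real.exp (-1 * r) = Real.exp (-r) := by norm_num
      rw [h2]
      field_simp
    have key2 : ∀ i : Fin (p+1),
        Real.exp r * (d i * (r^(2*(p - i.val)) * (myP 1 i.val).eval r))
          = r^(2*p) * (d i * psibar i.val r) := by
      intro i
      rw [hpsibar i.val r hr]
      have hip : i.val ≤ p := Nat.lt_succ_iff.mp i.isLt
      have e1 : 2*(p - i.val) + 2*i.val = 2*p := by omega
      have : (r:ℝ)^(2*p) = r^(2*(p-i.val)) * r^(2*i.val) := by rw [← pow_add, e1]
      rw [this]
      have h2 : Real.exp (1 * r) = Real.exp r := by norm_num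
      rw [h2]
      field_simp
    have : Real.exp (-r) * A.eval r + Real.exp r * B.eval r
        = r^(2*p) * ((∑ i : Fin (p+1), c i * psi i.val r) + (∑ i : Fin (p+1), d i * psibar i.val r)) := by
      rw [hA, hB]
      simp only [eval_finset_sum, eval_mul, eval_C, eval_pow, eval_X]
      rw [Finset.mul_sum, Finset.mul_sum, mul_add, Finset.mul_sum, Finset.mul_sum]
      rw [Finset.sum_congr rfl (fun i _ => key1 i), Finset.sum_congr rfl (fun i _ => key2 i)]
    rw [this, hpt r hr, mul_zero]
  -- B = 0
  have hBzero : B = 0 := by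
    have hBev : Tendsto (fun r : ℝ => B.eval r) atTop (nhds 0) := by
      have h1 : Tendsto (fun r : ℝ => -(A.eval r / Real.exp r * Real.exp (-r))) atTop (nhds 0) := by
        have := (A.tendsto_div_exp_atTop.mul tendsto_exp_neg_atTop_nhds_zero).neg
        simpa using this
      refine h1.congr' ?_
      filter_upwards [eventually_gt_atTop (0:ℝ)] with r hr
      have h2 := hAB r hr
      have h3 : Real.exp r ≠ 0 := (Real.exp_pos r).ne'
      have h4 : Real.exp (-r) = (Real.exp r)⁻¹ := Real.exp_neg r
      field_simp [h4] at h2 ⊢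
      linarith
    by_contra hBne
    rcases lt_or_ge 0 B.degree with hdg | hdg
    · have h5 : Tendsto (fun r : ℝ => |B.eval r|) atTop atTop := B.abs_tendsto_atTop hdg
      have h6 : Tendsto (fun r : ℝ => |B.eval r|) atTop (nhds |0|) := hBev.abs
      exact not_tendsto_nhds_of_tendsto_atTop h5 _ h6
    · have h5 := Polynomial.eq_C_of_degree_le_zero hdg
      have h6 : Tendsto (fun _ : ℝ => B.coeff 0) atTop (nhds (B.coeff 0)) := tendsto_const_nhds
      have h7 : B.coeff 0 = 0 := by
        refine tendsto_nhds_unique ?_ hBev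
        refine h6.congr fun r => ?_
        conv_rhs => rw [h5]
        simp
      exact hBne (by rw [h5, h7, map_zero])
  -- A = 0
  have hAzero : A = 0 := by
    apply Polynomial.eq_zero_of_infinite_isRoot
    refine (Set.Ioi_infinite (0:ℝ)).mono ?_
    intro r hr
    have h1 := hAB r hr
    rw [hBzero] at h1
    simp only [eval_zero, mul_zero, add_zero] at h1
    have h3 : Real.exp (-r) ≠ 0 := (Real.exp_pos _).ne'
    exact (mul_eq_zero.mp h1).resolve_left h3
  have hcz := coeffs_zero (-1) (by norm_num) p c (hA ▸ hAzero)
  have hdz := coeffs_zero 1 one_ne_zero p d (hB ▸ hBzero)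
  intro k
  rcases k with i | i
  · exact hcz i
  · exact hdz i
end
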